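/- arXiv:2112.15587 — 8 statements merged into one kernel-verified Lean document; each statement's English description precedes it below -/
import Mathlib

section
/- Let L = L(p1,p2,p3) be the abelian group on generators x1, x2, x3 subject to the relations p1·x1 = p2·x2 = p3·x3, where p1, p2, p3 ≥ 2 are integers. Then every element x of L has a unique normal form x = l1·x1 + l2·x2 + l3·x3 + l·c with 0 ≤ li ≤ pi − 1 for each i and l ∈ ℤ, where c = p1·x1 = p2·x2 = p3·x3 is the canonical element. -/
/-- The subgroup of relations defining L(p₁,p₂,p₃): p₁·x₁ = p₂·x₂ = p₃·x₃. -/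
def LRel (p₁ p₂ p₃ : ℕ) : AddSubgroup (ℤ × ℤ × ℤ) :=
  AddSubgroup.closure {((p₁ : ℤ), -(p₂ : ℤ), (0 : ℤ)), ((0 : ℤ), (p₂ : ℤ), -(p₃ : ℤ))}

/-- The rank-one abelian group L(p₁,p₂,p₃) on generators x₁,x₂,x₃ with
p₁·x₁ = p₂·x₂ = p₃·x₃. -/
abbrev LGrp (p₁ p₂ p₃ : ℕ) := (ℤ × ℤ × ℤ) ⧸ LRel p₁ p₂ p₃

def lx₁ (p₁ p₂ p₃ : ℕ) : LGrp p₁ p₂ p₃ := QuotientAddGroup.mk ((1 : ℤ), 0, 0)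
def lx₂ (p₁ p₂ p₃ : ℕ) : LGrp p₁ p₂ p₃ := QuotientAddGroup.mk ((0 : ℤ), 1, 0)
def lx₃ (p₁ p₂ p₃ : ℕ) : LGrp p₁ p₂ p₃ := QuotientAddGroup.mk ((0 : ℤ), 0, 1)

/-- The canonical element c = p₁·x₁. -/
def lc (p₁ p₂ p₃ : ℕ) : LGrp p₁ p₂ p₃ := (p₁ : ℤ) • lx₁ p₁ p₂ p₃

/-- The dualizing element ω = c - x₁ - x₂ - x₃. -/
def lw (p₁ p₂ p₃ : ℕ) : LGrp p₁ p₂ p₃ :=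
  lc p₁ p₂ p₃ - lx₁ p₁ p₂ p₃ - lx₂ p₁ p₂ p₃ - lx₃ p₁ p₂ p₃

/-- The partial order on L: u ≤ v iff v - u is a nonnegative integer combination
of x₁, x₂, x₃. -/
def lle (p₁ p₂ p₃ : ℕ) (u v : LGrp p₁ p₂ p₃) : Prop :=
  ∃ a b c : ℕ, v = u + (a : ℤ) • lx₁ p₁ p₂ p₃ + (b : ℤ) • lx₂ p₁ p₂ p₃ + (c : ℤ) • lx₃ p₁ p₂ p₃

/-- The set S = { x | 0 ≤ x ≤ n·ω + c for all n ≥ 2 }. -/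
def lS (p₁ p₂ p₃ : ℕ) : Set (LGrp p₁ p₂ p₃) :=
  {x | lle p₁ p₂ p₃ 0 x ∧ ∀ n : ℕ, 2 ≤ n → lle p₁ p₂ p₃ x ((n : ℤ) • lw p₁ p₂ p₃ + lc p₁ p₂ p₃)}

lemma mem_LRel_iff (p₁ p₂ p₃ : ℕ) (v : ℤ × ℤ × ℤ) :
    v ∈ LRel p₁ p₂ p₃ ↔ ∃ m n : ℤ,
      v = (m * p₁, (n - m) * p₂, -n * p₃) := by
  rw [LRel, AddSubgroup.mem_closure_pair]
  constructor
  · rintro ⟨m, n, rfl⟩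
    exact ⟨m, n, by simp [Prod.ext_iff]; ring⟩
  · rintro ⟨m, n, rfl⟩
    exact ⟨m, n, by simp [Prod.ext_iff]; ring⟩

lemma mk_zsmul' (p₁ p₂ p₃ : ℕ) (k : ℤ) (v : ℤ × ℤ × ℤ) :
    k • (QuotientAddGroup.mk v : LGrp p₁ p₂ p₃) = QuotientAddGroup.mk (k • v) :=
  (QuotientAddGroup.mk_zsmul (LRel p₁ p₂ p₃) v k).symm

lemma comb_eq (p₁ p₂ p₃ : ℕ) (a b c l : ℤ) :
    a • lx₁ p₁ p₂ p₃ + b • lx₂ p₁ p₂ p₃ + c • lx₃ p₁ p₂ p₃ + l • lc p₁ p₂ p₃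
      = QuotientAddGroup.mk (a + l * p₁, b, c) := by
  simp only [lx₁, lx₂, lx₃, lc, mk_zsmul', smul_smul, ← QuotientAddGroup.mk_add]
  congr 1
  simp [Prod.ext_iff, Prod.smul_def, mul_comm]

/-- Every element of L(p₁,p₂,p₃) has a unique normal form. -/
theorem normal_form_exists_unique (p₁ p₂ p₃ : ℕ)
    (hp₁ : 2 ≤ p₁) (hp₂ : 2 ≤ p₂) (hp₃ : 2 ≤ p₃) (x : LGrp p₁ p₂ p₃) :
    ∃! q : ℤ × ℤ × ℤ × ℤ,
      (0 ≤ q.1 ∧ q.1 ≤ (p₁ : ℤ) - 1) ∧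
      (0 ≤ q.2.1 ∧ q.2.1 ≤ (p₂ : ℤ) - 1) ∧
      (0 ≤ q.2.2.1 ∧ q.2.2.1 ≤ (p₃ : ℤ) - 1) ∧
      x = q.1 • lx₁ p₁ p₂ p₃ + q.2.1 • lx₂ p₁ p₂ p₃ + q.2.2.1 • lx₃ p₁ p₂ p₃ +
          q.2.2.2 • lc p₁ p₂ p₃ := by
  have hP₁ : (0 : ℤ) < p₁ := by exact_mod_cast Nat.lt_of_lt_of_le Nat.zero_lt_two hp₁
  have hP₂ : (0 : ℤ) < p₂ := by exact_mod_cast Nat.lt_of_lt_of_le Nat.zero_lt_two hp₂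
  have hP₃ : (0 : ℤ) < p₃ := by exact_mod_cast Nat.lt_of_lt_of_le Nat.zero_lt_two hp₃
  induction x using QuotientAddGroup.induction_on with
  | H v =>
  obtain ⟨a, b, c⟩ := v
  refine ⟨(a % p₁, b % p₂, c % p₃, a / p₁ + b / p₂ + c / p₃), ?_, ?_⟩
  · refine ⟨⟨Int.emod_nonneg a hP₁.ne', ?_⟩,
      ⟨Int.emod_nonneg b hP₂.ne', ?_⟩,
      ⟨Int.emod_nonneg c hP₃.ne', ?_⟩, ?_⟩
    · show a % (p₁ : ℤ) ≤ (p₁ : ℤ) - 1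
      have := Int.emod_lt_of_pos a hP₁; omega
    · show b % (p₂ : ℤ) ≤ (p₂ : ℤ) - 1
      have := Int.emod_lt_of_pos b hP₂; omega
    · show c % (p₃ : ℤ) ≤ (p₃ : ℤ) - 1
      have := Int.emod_lt_of_pos c hP₃; omega
    show QuotientAddGroup.mk (a, b, c) = _
    rw [comb_eq, QuotientAddGroup.eq, mem_LRel_iff]
    refine ⟨b / p₂ + c / p₃, c / p₃, ?_⟩
    have h1 := Int.emod_add_mul_ediv a p₁
    have h2 := Int.emod_add_mul_ediv b p₂
    have h3 := Int.emod_add_mul_ediv c p₃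
    rw [Prod.ext_iff, Prod.ext_iff]
    refine ⟨?_, ?_, ?_⟩
    · show -a + (a % p₁ + (a / p₁ + b / p₂ + c / p₃) * p₁) = (b / p₂ + c / p₃) * p₁
      linear_combination h1
    · show -b + b % p₂ = (c / p₃ - (b / p₂ + c / p₃)) * p₂
      linear_combination h2
    · show -c + c % p₃ = -(c / p₃) * p₃
      linear_combination h3
  · rintro ⟨l₁, l₂, l₃, l⟩ ⟨⟨h1a, h1b⟩, ⟨h2a, h2b⟩, ⟨h3a, h3b⟩, heq⟩
    simp only at h1a h1b h2a h2b h3a h3b heq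
    rw [show (QuotientAddGroup.mk (a, b, c) : LGrp p₁ p₂ p₃) = _ from rfl, comb_eq,
      QuotientAddGroup.eq, mem_LRel_iff] at heq
    obtain ⟨m, n, hmn⟩ := heq
    rw [Prod.ext_iff, Prod.ext_iff] at hmn
    obtain ⟨e1, e2, e3⟩ := hmn
    replace e1 : -a + (l₁ + l * p₁) = m * p₁ := e1
    replace e2 : -b + l₂ = (n - m) * p₂ := e2
    replace e3 : -c + l₃ = -n * p₃ := e3
    have hb : l₂ = b % p₂ := by
      have h : l₂ % p₂ = b % p₂ := by
        have h' : l₂ = b + (n - m) * p₂ := by linarith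
        simp [h', Int.add_mul_emod_self_right]
      rwa [Int.emod_eq_of_lt h2a (by omega)] at h
    have hc : l₃ = c % p₃ := by
      have h : l₃ % p₃ = c % p₃ := by
        have h' : l₃ = c + -n * p₃ := by linarith
        simp [h', Int.add_mul_emod_self_right]
      rwa [Int.emod_eq_of_lt h3a (by omega)] at h
    have ha : l₁ = a % p₁ := by
      have h : l₁ % p₁ = a % p₁ := by
        have h' : l₁ = a + (m - l) * p₁ := by linarith
        simp [h', Int.add_mul_emod_self_right]
      rwa [Int.emod_eq_of_lt h1a (by omega)] at h
    have hn : n = c / p₃ := by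
      have hd := Int.emod_add_mul_ediv c p₃
      have h : (c / p₃) * p₃ = n * p₃ := by rw [hc] at e3; linear_combination hd - e3
      exact (mul_right_cancel₀ hP₃.ne' h).symm
    have hm : m = b / p₂ + c / p₃ := by
      have hd := Int.emod_add_mul_ediv b p₂
      have h : (b / p₂ + c / p₃) * p₂ = m * p₂ := by
        rw [hb] at e2; linear_combination hd - e2 - (p₂:ℤ) * hn
      exact (mul_right_cancel₀ hP₂.ne' h).symm
    have hl : l = a / p₁ + b / p₂ + c / p₃ := by
      have hd := Int.emod_add_mul_ediv a p₁
      have h : l * p₁ = (a / p₁ + b / p₂ + c / p₃) * p₁ := by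
        rw [ha, hm] at e1; linear_combination e1 - hd
      exact mul_right_cancel₀ hP₁.ne' h
    simp [ha, hb, hc, hl]
end

section
/- In the group L(2,4,5) with canonical element c and dualizing element w, define S = { x ∈ L : 0 ≤ x and x ≤ n·w + c for every n ≥ 2 }, where y ≤ z means z − y is a nonnegative integer combination of x1, x2, x3. Then S = {0, x2}. -/
/-! ### Auxiliary machinery for (2,4,5) -/

/-- The invariant homomorphism `(a,b,c) ↦ (10a+5b+4c, a mod 2)`. -/
def fL : (ℤ × ℤ × ℤ) →+ (ℤ × ZMod 2) where
  toFun p := (10 * p.1 + 5 * p.2.1 + 4 * p.2.2, (p.1 : ZMod 2))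
  map_zero' := by simp
  map_add' p q := by
    refine Prod.ext ?_ ?_
    · simp only [Prod.fst_add, Prod.snd_add]; ring
    · simp only [Prod.fst_add, Prod.snd_add]; push_cast; ring

lemma fL_ker : LRel 2 4 5 ≤ fL.ker := by
  rw [LRel, AddSubgroup.closure_le]
  rintro v hv
  simp only [Set.mem_insert_iff, Set.mem_singleton_iff] at hv
  rcases hv with rfl | rfl <;>
    · simp only [SetLike.mem_coe, AddMonoidHom.mem_ker, fL, AddMonoidHom.coe_mk,
        ZeroHom.coe_mk, Prod.mk.injEq]
      refine Prod.ext (by norm_num) (by norm_num <;> decide)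

/-- The resulting embedding of `LGrp 2 4 5` into `ℤ × ZMod 2`. -/
def ψ : LGrp 2 4 5 →+ (ℤ × ZMod 2) := QuotientAddGroup.lift (LRel 2 4 5) fL fL_ker

lemma ψ_mk (p : ℤ × ℤ × ℤ) :
    ψ (QuotientAddGroup.mk p) = (10 * p.1 + 5 * p.2.1 + 4 * p.2.2, (p.1 : ZMod 2)) := rfl

lemma ψ_inj : Function.Injective ψ := by
  rw [injective_iff_map_eq_zero]
  intro x hx
  induction x using QuotientAddGroup.induction_on with
  | H p =>
    rw [ψ_mk, Prod.mk_eq_zero] at hx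
    obtain ⟨h1, h2⟩ := hx
    rw [ZMod.intCast_zmod_eq_zero_iff_dvd] at h2
    obtain ⟨a, b, c⟩ := p
    simp only at h1 h2
    have hb : (4 : ℤ) ∣ b := by omega
    rw [QuotientAddGroup.eq_zero_iff, LRel]
    rw [AddSubgroup.mem_closure_pair]
    refine ⟨a / 2, a / 2 + b / 4, ?_⟩
    simp only [Prod.smul_mk, smul_eq_mul, Prod.mk_add_mk, Prod.mk.injEq, Nat.cast_ofNat,
      mul_neg, mul_zero, add_zero, zero_add]
    refine ⟨by omega, by omega, by omega⟩

lemma ψ_x₁ : ψ (lx₁ 2 4 5) = (10, 1) := by rw [lx₁, ψ_mk]; norm_num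
lemma ψ_x₂ : ψ (lx₂ 2 4 5) = (5, 0) := by rw [lx₂, ψ_mk]; norm_num
lemma ψ_x₃ : ψ (lx₃ 2 4 5) = (4, 0) := by rw [lx₃, ψ_mk]; norm_num

lemma ψ_c : ψ (lc 2 4 5) = (20, 0) := by
  rw [lc, map_zsmul, ψ_x₁]
  decide

lemma ψ_w : ψ (lw 2 4 5) = (1, 1) := by
  rw [lw, map_sub, map_sub, map_sub, ψ_c, ψ_x₁, ψ_x₂, ψ_x₃]
  decide

lemma ψ_nwc (n : ℕ) :
    ψ ((n : ℤ) • lw 2 4 5 + lc 2 4 5) = ((n : ℤ) + 20, (n : ZMod 2)) := by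
  rw [map_add, map_zsmul, ψ_w, ψ_c, Prod.smul_mk, Prod.mk_add_mk]
  refine Prod.ext ?_ ?_
  · simp
  · simp [zsmul_eq_mul]

lemma ψ_comb (u : LGrp 2 4 5) (a b c : ℕ) :
    ψ (u + (a : ℤ) • lx₁ 2 4 5 + (b : ℤ) • lx₂ 2 4 5 + (c : ℤ) • lx₃ 2 4 5)
      = ψ u + (10 * (a : ℤ) + 5 * b + 4 * c, (a : ZMod 2)) := by
  rw [map_add, map_add, map_add, map_zsmul, map_zsmul, map_zsmul, ψ_x₁, ψ_x₂, ψ_x₃]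
  rw [add_assoc, add_assoc, add_assoc]
  congr 1
  rw [Prod.smul_mk, Prod.smul_mk, Prod.smul_mk, Prod.mk_add_mk, Prod.mk_add_mk]
  refine Prod.ext ?_ ?_
  · simp; ring
  · simp [zsmul_eq_mul]

/-- Representability by the numerical semigroup ⟨4,5⟩. -/
lemma rep45 (N : ℕ) (hN : 12 ≤ N ∨ (N % 2 = 0 ∧ 8 ≤ N)) :
    ∃ b c : ℕ, N = 5 * b + 4 * c := by
  exact ⟨N % 4, (N - 5 * (N % 4)) / 4, by omega⟩

/-- For weight type (2,4,5), S = {0, x₂}. -/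
theorem S_245 : lS 2 4 5 = {0, lx₂ 2 4 5} := by
  ext x
  simp only [lS, Set.mem_setOf_eq, Set.mem_insert_iff, Set.mem_singleton_iff]
  constructor
  · rintro ⟨⟨a, b, c, hx⟩, hn⟩
    obtain ⟨a2, b2, c2, h2⟩ := hn 2 (by norm_num)
    obtain ⟨a3, b3, c3, h3⟩ := hn 3 (by norm_num)
    obtain ⟨a5, b5, c5, h5⟩ := hn 5 (by norm_num)
    -- translate everything through ψ
    have Hx := congrArg ψ hx
    rw [ψ_comb, map_zero, zero_add] at Hx
    have H2 := congrArg ψ h2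
    have H3 := congrArg ψ h3
    have H5 := congrArg ψ h5
    rw [ψ_nwc, ψ_comb, Hx, Prod.mk_add_mk, Prod.mk.injEq] at H2 H3 H5
    obtain ⟨H2a, H2b⟩ := H2
    obtain ⟨H3a, H3b⟩ := H3
    obtain ⟨H5a, H5b⟩ := H5
    -- parity facts
    have P2 : (2 : ℕ) % 2 = (a + a2) % 2 := by
      rw [← ZMod.natCast_eq_natCast_iff']; push_cast; exact H2b
    have P3 : (3 : ℕ) % 2 = (a + a3) % 2 := by
      rw [← ZMod.natCast_eq_natCast_iff']; push_cast; exact H3b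
    have P5 : (5 : ℕ) % 2 = (a + a5) % 2 := by
      rw [← ZMod.natCast_eq_natCast_iff']; push_cast; exact H5b
    have E2 : (2:ℕ) + 20 = 10 * a + 5 * b + 4 * c + (10 * a2 + 5 * b2 + 4 * c2) := by
      exact_mod_cast H2a
    have E3 : (3:ℕ) + 20 = 10 * a + 5 * b + 4 * c + (10 * a3 + 5 * b3 + 4 * c3) := by
      exact_mod_cast H3a
    have E5 : (5:ℕ) + 20 = 10 * a + 5 * b + 4 * c + (10 * a5 + 5 * b5 + 4 * c5) := by
      exact_mod_cast H5a
    have key : (a = 0 ∧ b = 0 ∧ c = 0) ∨ (a = 0 ∧ b = 1 ∧ c = 0) := by omega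
    rcases key with ⟨rfl, rfl, rfl⟩ | ⟨rfl, rfl, rfl⟩
    · left; simpa using hx
    · right; simpa using hx
  · rintro (rfl | rfl) <;> constructor
    · exact ⟨0, 0, 0, by simp⟩
    · intro n hn
      rcases Nat.even_or_odd n with he | ho
      · obtain ⟨b, c, hbc⟩ := rep45 (n + 20) (by have := Nat.even_iff.mp he; omega)
        refine ⟨0, b, c, ψ_inj ?_⟩
        rw [ψ_nwc, ψ_comb, map_zero, zero_add]
        refine Prod.ext ?_ ?_
        · simp; omega
        · simp
          rw [ZMod.natCast_eq_zero_iff]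
          exact he.two_dvd
      · obtain ⟨b, c, hbc⟩ := rep45 (n + 10) (by have := Nat.odd_iff.mp ho; omega)
        refine ⟨1, b, c, ψ_inj ?_⟩
        rw [ψ_nwc, ψ_comb, map_zero, zero_add]
        refine Prod.ext ?_ ?_
        · simp; omega
        · simp
          have : ((n : ℕ) : ZMod 2) = ((1 : ℕ) : ZMod 2) := by
            rw [ZMod.natCast_eq_natCast_iff]
            simp [Nat.ModEq]
            have := Nat.odd_iff.mp ho
            omega
          simpa using this
    · exact ⟨0, 1, 0, by simp⟩
    · intro n hn
      rcases Nat.even_or_odd n with he | ho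
      · obtain ⟨b, c, hbc⟩ := rep45 (n + 15) (by have := Nat.even_iff.mp he; omega)
        refine ⟨0, b, c, ψ_inj ?_⟩
        rw [ψ_nwc, ψ_comb, ψ_x₂]
        refine Prod.ext ?_ ?_
        · simp; omega
        · simp
          rw [ZMod.natCast_eq_zero_iff]
          exact he.two_dvd
      · obtain ⟨b, c, hbc⟩ := rep45 (n + 5) (by have := Nat.odd_iff.mp ho; omega)
        refine ⟨1, b, c, ψ_inj ?_⟩
        rw [ψ_nwc, ψ_comb, ψ_x₂]
        refine Prod.ext ?_ ?_
        · simp; omega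
        · simp
          have : ((n : ℕ) : ZMod 2) = ((1 : ℕ) : ZMod 2) := by
            rw [ZMod.natCast_eq_natCast_iff]
            simp [Nat.ModEq]
            have := Nat.odd_iff.mp ho
            omega
          simpa using this
end

section
/- In the group L(2,5,6) with canonical element c and dualizing element w, define S = { x ∈ L : 0 ≤ x and x ≤ n·w + c for every n ≥ 2 }. Then S = { x : 0 ≤ x ≤ 3·x3 } ∪ { x : 0 ≤ x ≤ 2·x2 + x3 }. -/
/-- Membership in the numerical semigroup generated by 5 and 6. -/
def Gd (m : ℤ) : Prop := ∃ b c : ℕ, m = 6*b+5*c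

lemma Gd_iff (m : ℤ) : Gd m ↔
    (m = 0 ∨ m = 5 ∨ m = 6 ∨ m = 10 ∨ m = 11 ∨ m = 12 ∨ (15 ≤ m ∧ m ≠ 19)) := by
  constructor
  · rintro ⟨b, c, rfl⟩
    by_cases hb : b ≤ 3
    · by_cases hc : c ≤ 3
      · interval_cases b <;> interval_cases c <;> norm_num
      · omega
    · omega
  · intro h
    by_cases h20 : 20 ≤ m
    · exact ⟨(m % 5).toNat, ((m - 6*(m % 5))/5).toNat, by omega⟩
    · have hm : m = 0 ∨ m = 5 ∨ m = 6 ∨ m = 10 ∨ m = 11 ∨ m = 12 ∨ m = 15 ∨ m = 16 ∨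
          m = 17 ∨ m = 18 := by omega
      rcases hm with rfl|rfl|rfl|rfl|rfl|rfl|rfl|rfl|rfl|rfl
      exacts [⟨0,0, by norm_num⟩, ⟨0,1, by norm_num⟩, ⟨1,0, by norm_num⟩, ⟨0,2, by norm_num⟩,
        ⟨1,1, by norm_num⟩, ⟨2,0, by norm_num⟩, ⟨0,3, by norm_num⟩, ⟨1,2, by norm_num⟩,
        ⟨2,1, by norm_num⟩, ⟨3,0, by norm_num⟩]

lemma mem_LRel (x : ℤ × ℤ × ℤ) :
    x ∈ LRel 2 5 6 ↔ 15 * x.1 + 6 * x.2.1 + 5 * x.2.2 = 0 ∧ 2 ∣ x.1 := by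
  rw [LRel, AddSubgroup.mem_closure_pair]
  constructor
  · rintro ⟨s, t, rfl⟩
    simp only [Prod.fst_add, Prod.snd_add, Prod.smul_fst, Prod.smul_snd, smul_eq_mul]
    push_cast
    constructor
    · ring
    · exact ⟨s, by ring⟩
  · rintro ⟨h1, h2⟩
    have h5 : (5:ℤ) ∣ x.2.1 := by omega
    refine ⟨x.1/2, x.1/2 + x.2.1/5, ?_⟩
    have hx : x = (x.1, x.2.1, x.2.2) := rfl
    rw [hx, Prod.ext_iff, Prod.ext_iff]
    simp only [Prod.fst_add, Prod.snd_add, Prod.smul_fst, Prod.smul_snd, smul_eq_mul]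
    push_cast
    refine ⟨by omega, by omega, by omega⟩

lemma lle_iff (u v : ℤ × ℤ × ℤ) :
    lle 2 5 6 (QuotientAddGroup.mk u) (QuotientAddGroup.mk v) ↔
      ((v.1 - u.1) % 2 = 0 ∧ Gd (15*(v.1-u.1) + 6*(v.2.1-u.2.1) + 5*(v.2.2-u.2.2))) ∨
      ((v.1 - u.1) % 2 = 1 ∧ Gd (15*(v.1-u.1) + 6*(v.2.1-u.2.1) + 5*(v.2.2-u.2.2) - 15)) := by
  unfold lle Gd
  constructor
  · rintro ⟨a, b, c, h⟩
    simp only [lx₁, lx₂, lx₃, ← QuotientAddGroup.mk_zsmul, ← QuotientAddGroup.mk_add,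
      QuotientAddGroup.eq_iff_sub_mem, mem_LRel] at h
    simp only [Prod.fst_sub, Prod.snd_sub, Prod.fst_add, Prod.snd_add, Prod.smul_fst,
      Prod.smul_snd, smul_eq_mul] at h
    obtain ⟨h1, h2⟩ := h
    by_cases hp : (v.1 - u.1) % 2 = 0
    · exact Or.inl ⟨hp, b + 5*(a/2), c, by omega⟩
    · exact Or.inr ⟨by omega, b + 5*(a/2), c, by omega⟩
  · rintro (⟨hp, b, c, h⟩ | ⟨hp, b, c, h⟩)
    · refine ⟨0, b, c, ?_⟩
      simp only [lx₁, lx₂, lx₃, ← QuotientAddGroup.mk_zsmul, ← QuotientAddGroup.mk_add,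
        QuotientAddGroup.eq_iff_sub_mem, mem_LRel]
      simp only [Prod.fst_sub, Prod.snd_sub, Prod.fst_add, Prod.snd_add, Prod.smul_fst,
        Prod.smul_snd, smul_eq_mul]
      constructor <;> omega
    · refine ⟨1, b, c, ?_⟩
      simp only [lx₁, lx₂, lx₃, ← QuotientAddGroup.mk_zsmul, ← QuotientAddGroup.mk_add,
        QuotientAddGroup.eq_iff_sub_mem, mem_LRel]
      simp only [Prod.fst_sub, Prod.snd_sub, Prod.fst_add, Prod.snd_add, Prod.smul_fst,
        Prod.smul_snd, smul_eq_mul]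
      constructor <;> omega

lemma zero_rep : (0 : LGrp 2 5 6) = QuotientAddGroup.mk (0, 0, 0) := rfl

lemma t3_rep : (3 : ℤ) • lx₃ 2 5 6 = QuotientAddGroup.mk ((0:ℤ), 0, 3) := by
  rw [lx₃, ← QuotientAddGroup.mk_zsmul]
  norm_num [Prod.ext_iff]

lemma t17_rep : (2 : ℤ) • lx₂ 2 5 6 + lx₃ 2 5 6 = QuotientAddGroup.mk ((0:ℤ), 2, 1) := by
  rw [lx₂, lx₃, ← QuotientAddGroup.mk_zsmul, ← QuotientAddGroup.mk_add]
  norm_num [Prod.ext_iff]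

lemma target_rep (n : ℕ) :
    (n : ℤ) • lw 2 5 6 + lc 2 5 6 = QuotientAddGroup.mk (((n:ℤ) + 2, -(n:ℤ), -(n:ℤ))) := by
  rw [lw, lc, lx₁, lx₂, lx₃]
  rw [← QuotientAddGroup.mk_zsmul, ← QuotientAddGroup.mk_sub, ← QuotientAddGroup.mk_sub,
    ← QuotientAddGroup.mk_sub, ← QuotientAddGroup.mk_zsmul, ← QuotientAddGroup.mk_add]
  congr 1
  simp [Prod.ext_iff]

set_option maxHeartbeats 4000000 in
/-- For weight type (2,5,6), S = {x | 0 ≤ x ≤ 3x₃} ∪ {x | 0 ≤ x ≤ 2x₂ + x₃}. -/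
theorem S_256 :
    lS 2 5 6 =
      {x | lle 2 5 6 0 x ∧ lle 2 5 6 x ((3 : ℤ) • lx₃ 2 5 6)} ∪
      {x | lle 2 5 6 0 x ∧ lle 2 5 6 x ((2 : ℤ) • lx₂ 2 5 6 + lx₃ 2 5 6)} := by
  ext x
  refine QuotientAddGroup.induction_on x ?_
  rintro ⟨a, b, c⟩
  simp only [lS, Set.mem_union, Set.mem_setOf_eq, zero_rep, t3_rep, t17_rep, target_rep,
    lle_iff, Gd_iff]
  constructor
  · rintro ⟨h0, hn⟩
    have h2 := hn 2 (by norm_num)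
    have h3 := hn 3 (by norm_num)
    have h5 := hn 5 (by norm_num)
    clear hn
    push_cast at h2 h3 h5
    have hpar : a % 2 = 0 := by omega
    have key : 15*a+6*b+5*c = 0 ∨ 15*a+6*b+5*c = 5 ∨ 15*a+6*b+5*c = 6 ∨
        15*a+6*b+5*c = 10 ∨ 15*a+6*b+5*c = 11 ∨ 15*a+6*b+5*c = 12 ∨
        15*a+6*b+5*c = 15 ∨ 15*a+6*b+5*c = 17 := by
      clear h2
      omega
    clear h0 h2 h3 h5
    rcases key with h|h|h|h|h|h|h|h <;> omega
  · rintro (⟨h0, h1⟩ | ⟨h0, h1⟩)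
    · have hpar : a % 2 = 0 := by omega
      have key : 15*a+6*b+5*c = 0 ∨ 15*a+6*b+5*c = 5 ∨ 15*a+6*b+5*c = 10 ∨
          15*a+6*b+5*c = 15 := by omega
      refine ⟨h0, fun n hn => ?_⟩
      clear h0 h1
      rcases key with h|h|h|h <;> rcases Nat.even_or_odd n with ⟨m, rfl⟩|⟨m, rfl⟩ <;> omega
    · have hpar : a % 2 = 0 := by omega
      have key : 15*a+6*b+5*c = 0 ∨ 15*a+6*b+5*c = 5 ∨ 15*a+6*b+5*c = 6 ∨
          15*a+6*b+5*c = 11 ∨ 15*a+6*b+5*c = 12 ∨ 15*a+6*b+5*c = 17 := by omega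
      refine ⟨h0, fun n hn => ?_⟩
      clear h0 h1
      rcases key with h|h|h|h|h|h <;> rcases Nat.even_or_odd n with ⟨m, rfl⟩|⟨m, rfl⟩ <;> omega
end

section
/- Let p1, p2, p3 ≥ 2 be integers with 1/p1 + 1/p2 + 1/p3 < 1, i.e., the quantity δ(w) = p·(1 − 1/p1 − 1/p2 − 1/p3) is positive where p = lcm(p1,p2,p3) and w is the dualizing element of L(p1,p2,p3). If a·xi lies in S = { x ∈ L : 0 ≤ x ≤ n·w + c for all n ≥ 2 } for some integer a > 0 and some i ∈ {1,2,3}, then (pi − a + j)·w > 0 for every 1 ≤ j ≤ a, where y > 0 means y ≥ 0 and y ≠ 0 in the partial order generated by x1, x2, x3. -/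
/-! ### Auxiliary lemmas -/

lemma lgrp_eq_iff (p₁ p₂ p₃ : ℕ) (u₁ u₂ u₃ v₁ v₂ v₃ : ℤ) :
    (QuotientAddGroup.mk (u₁, u₂, u₃) : LGrp p₁ p₂ p₃) = QuotientAddGroup.mk (v₁, v₂, v₃) ↔
    ∃ s t : ℤ, v₁ - u₁ = s * p₁ ∧ v₂ - u₂ = t * p₂ - s * p₂ ∧ v₃ - u₃ = -(t * p₃) := by
  rw [QuotientAddGroup.eq, LRel, AddSubgroup.mem_closure_pair]
  simp only [Prod.smul_mk, smul_eq_mul, Prod.mk_add_mk, Prod.neg_mk, Prod.mk.injEq,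
    mul_zero, mul_neg, add_zero, zero_add, mul_one]
  constructor
  · rintro ⟨s, t, h1, h2, h3⟩
    exact ⟨s, t, by linarith, by linarith, by linarith⟩
  · rintro ⟨s, t, h1, h2, h3⟩
    exact ⟨s, t, by linarith, by linarith, by linarith⟩

lemma lgrp_zsmul_mk (p₁ p₂ p₃ : ℕ) (m u₁ u₂ u₃ : ℤ) :
    m • (QuotientAddGroup.mk (u₁, u₂, u₃) : LGrp p₁ p₂ p₃)
      = QuotientAddGroup.mk (m * u₁, m * u₂, m * u₃) := by
  rw [← QuotientAddGroup.mk_zsmul]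
  simp [Prod.smul_mk, smul_eq_mul]

lemma lgrp_mk_add (p₁ p₂ p₃ : ℕ) (u₁ u₂ u₃ v₁ v₂ v₃ : ℤ) :
    (QuotientAddGroup.mk (u₁, u₂, u₃) : LGrp p₁ p₂ p₃) + QuotientAddGroup.mk (v₁, v₂, v₃)
      = QuotientAddGroup.mk (u₁ + v₁, u₂ + v₂, u₃ + v₃) := by
  rw [← QuotientAddGroup.mk_add]
  rfl

lemma lw_eq (p₁ p₂ p₃ : ℕ) :
    lw p₁ p₂ p₃ = QuotientAddGroup.mk ((p₁ : ℤ) - 1, -1, -1) := by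
  unfold lw lc lx₁ lx₂ lx₃
  rw [lgrp_zsmul_mk]
  rw [sub_sub, sub_sub, sub_eq_iff_eq_add, lgrp_mk_add, lgrp_mk_add, lgrp_mk_add]
  norm_num

lemma lw_smul (p₁ p₂ p₃ : ℕ) (m : ℤ) :
    m • lw p₁ p₂ p₃ = QuotientAddGroup.mk (m * ((p₁ : ℤ) - 1), -m, -m) := by
  rw [lw_eq, lgrp_zsmul_mk]; norm_num

lemma lwc (p₁ p₂ p₃ : ℕ) (n : ℤ) :
    n • lw p₁ p₂ p₃ + lc p₁ p₂ p₃
      = QuotientAddGroup.mk (n * ((p₁ : ℤ) - 1) + p₁, -n, -n) := by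
  rw [lw_smul]
  unfold lc lx₁
  rw [lgrp_zsmul_mk, lgrp_mk_add]
  norm_num

lemma ax1 (p₁ p₂ p₃ : ℕ) (a : ℤ) :
    a • lx₁ p₁ p₂ p₃ = QuotientAddGroup.mk ((a : ℤ), 0, 0) := by
  unfold lx₁; rw [lgrp_zsmul_mk]; norm_num

lemma ax2 (p₁ p₂ p₃ : ℕ) (a : ℤ) :
    a • lx₂ p₁ p₂ p₃ = QuotientAddGroup.mk ((0 : ℤ), a, 0) := by
  unfold lx₂; rw [lgrp_zsmul_mk]; norm_num

lemma ax3 (p₁ p₂ p₃ : ℕ) (a : ℤ) :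
    a • lx₃ p₁ p₂ p₃ = QuotientAddGroup.mk ((0 : ℤ), 0, a) := by
  unfold lx₃; rw [lgrp_zsmul_mk]; norm_num

lemma lle_iff_s9 (p₁ p₂ p₃ : ℕ) (u₁ u₂ u₃ v₁ v₂ v₃ : ℤ) :
    lle p₁ p₂ p₃ (QuotientAddGroup.mk (u₁, u₂, u₃)) (QuotientAddGroup.mk (v₁, v₂, v₃)) ↔
    ∃ A B C : ℕ, ∃ s t : ℤ,
      v₁ - u₁ - A = s * p₁ ∧ v₂ - u₂ - B = t * p₂ - s * p₂ ∧ v₃ - u₃ - C = -(t * p₃) := by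
  unfold lle lx₁ lx₂ lx₃
  constructor
  · rintro ⟨A, B, C, h⟩
    rw [lgrp_zsmul_mk, lgrp_zsmul_mk, lgrp_zsmul_mk, lgrp_mk_add, lgrp_mk_add, lgrp_mk_add] at h
    norm_num at h
    rw [lgrp_eq_iff] at h
    obtain ⟨s, t, h1, h2, h3⟩ := h
    exact ⟨A, B, C, -s, -t, by linarith, by linarith, by linarith⟩
  · rintro ⟨A, B, C, s, t, h1, h2, h3⟩
    refine ⟨A, B, C, ?_⟩
    rw [lgrp_zsmul_mk, lgrp_zsmul_mk, lgrp_zsmul_mk, lgrp_mk_add, lgrp_mk_add, lgrp_mk_add]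
    norm_num
    rw [lgrp_eq_iff]
    exact ⟨-s, -t, by linarith, by linarith, by linarith⟩

set_option maxHeartbeats 2000000 in
/-- Lemma "n·ω positive": if δ(ω) > 0 (i.e. 1/p₁ + 1/p₂ + 1/p₃ < 1) and
a·xᵢ ∈ S for some a > 0, then (pᵢ - a + j)·ω > 0 for all 1 ≤ j ≤ a,
where y > 0 means 0 ≤ y and y ≠ 0. -/
theorem n_omega_positive (p₁ p₂ p₃ : ℕ)
    (hp₁ : 2 ≤ p₁) (hp₂ : 2 ≤ p₂) (hp₃ : 2 ≤ p₃)
    (hneg : p₂ * p₃ + p₁ * p₃ + p₁ * p₂ < p₁ * p₂ * p₃)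
    (i : Fin 3) (a : ℤ) (ha : 0 < a)
    (hmem : a • (![lx₁ p₁ p₂ p₃, lx₂ p₁ p₂ p₃, lx₃ p₁ p₂ p₃] i) ∈ lS p₁ p₂ p₃) :
    ∀ j : ℤ, 1 ≤ j → j ≤ a →
      lle p₁ p₂ p₃ 0 ((((![p₁, p₂, p₃] i : ℕ) : ℤ) - a + j) • lw p₁ p₂ p₃) ∧
      (((![p₁, p₂, p₃] i : ℕ) : ℤ) - a + j) • lw p₁ p₂ p₃ ≠ 0 := by
  intro j hj1 hja
  have hp₁' : (2 : ℤ) ≤ p₁ := by exact_mod_cast hp₁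
  have hp₂' : (2 : ℤ) ≤ p₂ := by exact_mod_cast hp₂
  have hp₃' : (2 : ℤ) ≤ p₃ := by exact_mod_cast hp₃
  have hneg' : (p₂ : ℤ) * p₃ + p₁ * p₃ + p₁ * p₂ < (p₁ : ℤ) * p₂ * p₃ := by exact_mod_cast hneg
  have h0 : (0 : LGrp p₁ p₂ p₃) = QuotientAddGroup.mk ((0 : ℤ), 0, 0) := rfl
  -- the "nonzero" part, uniform in the cases
  have hnz : ∀ m : ℤ, 0 < m → m • lw p₁ p₂ p₃ ≠ 0 := by
    intro m hm hz
    rw [lw_smul, h0, lgrp_eq_iff] at hz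
    obtain ⟨s', t', g1, g2, g3⟩ := hz
    have key : m * ((p₁ : ℤ) * p₂ * p₃ - p₂ * p₃ - p₁ * p₃ - p₁ * p₂) = 0 := by
      linear_combination (-(p₂ : ℤ) * p₃) * g1 + (-(p₁ : ℤ) * p₃) * g2 + (-(p₁ : ℤ) * p₂) * g3
    have hpos : 0 < m * ((p₁ : ℤ) * p₂ * p₃ - p₂ * p₃ - p₁ * p₃ - p₁ * p₂) :=
      mul_pos hm (by linarith)
    linarith
  fin_cases i
  · -- i = 0
    obtain ⟨-, hub⟩ := hmem
    replace hub : ∀ n : ℕ, 2 ≤ n →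
        lle p₁ p₂ p₃ (a • lx₁ p₁ p₂ p₃) ((n : ℤ) • lw p₁ p₂ p₃ + lc p₁ p₂ p₃) := hub
    show lle p₁ p₂ p₃ 0 (((p₁ : ℤ) - a + j) • lw p₁ p₂ p₃) ∧
      ((p₁ : ℤ) - a + j) • lw p₁ p₂ p₃ ≠ 0
    set m : ℤ := (p₁ : ℤ) - a + j with hmdef
    -- n = 2
    have h2 := hub 2 le_rfl
    rw [lwc, ax1, lle_iff_s9] at h2
    obtain ⟨A, B, C, s, t, e1, e2, e3⟩ := h2
    have hA : (0 : ℤ) ≤ A := Int.natCast_nonneg A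
    have hB : (0 : ℤ) ≤ B := Int.natCast_nonneg B
    have hC : (0 : ℤ) ≤ C := Int.natCast_nonneg C
    push_cast at e1 e2 e3
    have ht1 : 1 ≤ t := by nlinarith
    have hst : 1 ≤ s - t := by nlinarith
    have hap : a + 2 ≤ (p₁ : ℤ) := by nlinarith
    have hm3 : 3 ≤ m := by omega
    have hmp : m ≤ (p₁ : ℤ) := by omega
    clear e1 e2 e3 hA hB hC ht1 hst
    -- n = m
    have hmt := hub m.toNat (by omega)
    rw [lwc, ax1, lle_iff_s9] at hmt
    obtain ⟨A, B, C, s, t, f1, f2, f3⟩ := hmt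
    have hA : (0 : ℤ) ≤ A := Int.natCast_nonneg A
    have hB : (0 : ℤ) ≤ B := Int.natCast_nonneg B
    have hC : (0 : ℤ) ≤ C := Int.natCast_nonneg C
    rw [Int.toNat_of_nonneg (by omega : (0:ℤ) ≤ m)] at f1 f2 f3
    have hs_lt : s < m := by
      have h1 : s * p₁ < m * p₁ := by linarith
      exact lt_of_mul_lt_mul_right h1 (by positivity)
    have hp2pos : (0 : ℤ) < p₂ := by linarith
    obtain ⟨k, hk⟩ : ∃ k : ℤ, k = -(-m / p₂) := ⟨_, rfl⟩
    have hk1 : m ≤ k * p₂ := by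
      have h := Int.emod_nonneg (-m) (ne_of_gt hp2pos)
      have h' := Int.mul_ediv_add_emod (-m) p₂
      have h'' : k * p₂ = -(p₂ * (-m / p₂)) := by rw [hk]; ring
      linarith
    have hk2 : k ≤ s - t := by
      have h1 : (t - s) * p₂ ≤ -m := by linarith
      have h2 : ((t - s) * p₂) / p₂ ≤ (-m) / p₂ := Int.ediv_le_ediv hp2pos h1
      rw [Int.mul_ediv_cancel _ (ne_of_gt hp2pos)] at h2
      linarith [hk.ge, hk.le]
    have hC' : 0 ≤ t * p₃ - m := by linarith
    have hA' : 0 ≤ m * ((p₁ : ℤ) - 1) - (t + k) * p₁ := by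
      nlinarith [mul_le_mul_of_nonneg_right (show t + k ≤ m - 1 by linarith)
        (show (0:ℤ) ≤ p₁ by linarith)]
    have hB' : 0 ≤ k * p₂ - m := by linarith
    constructor
    · rw [lw_smul, h0, lle_iff_s9]
      refine ⟨(m * ((p₁ : ℤ) - 1) - (t + k) * p₁).toNat, (k * p₂ - m).toNat,
        (t * p₃ - m).toNat, t + k, t, ?_, ?_, ?_⟩
      · rw [Int.toNat_of_nonneg hA']; push_cast; ring
      · rw [Int.toNat_of_nonneg hB']; push_cast; ring
      · rw [Int.toNat_of_nonneg hC']; push_cast; ring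
    · exact hnz m (by omega)
  · -- i = 1
    obtain ⟨-, hub⟩ := hmem
    replace hub : ∀ n : ℕ, 2 ≤ n →
        lle p₁ p₂ p₃ (a • lx₂ p₁ p₂ p₃) ((n : ℤ) • lw p₁ p₂ p₃ + lc p₁ p₂ p₃) := hub
    show lle p₁ p₂ p₃ 0 (((p₂ : ℤ) - a + j) • lw p₁ p₂ p₃) ∧
      ((p₂ : ℤ) - a + j) • lw p₁ p₂ p₃ ≠ 0
    set m : ℤ := (p₂ : ℤ) - a + j with hmdef
    have h2 := hub 2 le_rfl
    rw [lwc, ax2, lle_iff_s9] at h2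
    obtain ⟨A, B, C, s, t, e1, e2, e3⟩ := h2
    have hA : (0 : ℤ) ≤ A := Int.natCast_nonneg A
    have hB : (0 : ℤ) ≤ B := Int.natCast_nonneg B
    have hC : (0 : ℤ) ≤ C := Int.natCast_nonneg C
    push_cast at e1 e2 e3
    have ht1 : 1 ≤ t := by nlinarith
    have hst : 1 ≤ s - t := by nlinarith
    have hs2 : s ≤ 2 := by
      have h1 : s * p₁ < 3 * p₁ := by linarith
      have := lt_of_mul_lt_mul_right h1 (show (0:ℤ) ≤ p₁ by linarith)
      omega
    have hap : a + 2 ≤ (p₂ : ℤ) := by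
      have hmul := mul_le_mul_of_nonneg_right (show s - t ≤ 1 by omega)
        (show (0:ℤ) ≤ p₂ by linarith)
      nlinarith
    have hm3 : 3 ≤ m := by omega
    have hmp : m ≤ (p₂ : ℤ) := by omega
    clear e1 e2 e3 hA hB hC ht1 hst hs2
    have hmt := hub m.toNat (by omega)
    rw [lwc, ax2, lle_iff_s9] at hmt
    obtain ⟨A, B, C, s, t, f1, f2, f3⟩ := hmt
    have hA : (0 : ℤ) ≤ A := Int.natCast_nonneg A
    have hB : (0 : ℤ) ≤ B := Int.natCast_nonneg B
    have hC : (0 : ℤ) ≤ C := Int.natCast_nonneg C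
    rw [Int.toNat_of_nonneg (by omega : (0:ℤ) ≤ m)] at f1 f2 f3
    have hs_le : s ≤ m := by
      have h1 : s * p₁ < (m + 1) * p₁ := by linarith
      have := lt_of_mul_lt_mul_right h1 (show (0:ℤ) ≤ p₁ by linarith)
      omega
    have hst2 : 2 ≤ s - t := by
      by_contra h
      push_neg at h
      have := mul_le_mul_of_nonneg_right (show s - t ≤ 1 by omega)
        (show (0:ℤ) ≤ p₂ by linarith)
      nlinarith
    have hp3pos : (0 : ℤ) < p₃ := by linarith
    obtain ⟨k, hk⟩ : ∃ k : ℤ, k = -(-m / p₃) := ⟨_, rfl⟩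
    have hk1 : m ≤ k * p₃ := by
      have h := Int.emod_nonneg (-m) (ne_of_gt hp3pos)
      have h' := Int.mul_ediv_add_emod (-m) p₃
      have h'' : k * p₃ = -(p₃ * (-m / p₃)) := by rw [hk]; ring
      linarith
    have hk2 : k ≤ t := by
      have h1 : (-t) * p₃ ≤ -m := by linarith
      have h2 : ((-t) * p₃) / p₃ ≤ (-m) / p₃ := Int.ediv_le_ediv hp3pos h1
      rw [Int.mul_ediv_cancel _ (ne_of_gt hp3pos)] at h2
      linarith [hk.ge, hk.le]
    have hA' : 0 ≤ m * ((p₁ : ℤ) - 1) - (k + 1) * p₁ := by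
      nlinarith [mul_le_mul_of_nonneg_right (show k + 2 ≤ s by linarith)
        (show (0:ℤ) ≤ p₁ by linarith)]
    have hB' : 0 ≤ (p₂ : ℤ) - m := by omega
    have hC' : 0 ≤ k * p₃ - m := by linarith
    constructor
    · rw [lw_smul, h0, lle_iff_s9]
      refine ⟨(m * ((p₁ : ℤ) - 1) - (k + 1) * p₁).toNat, ((p₂ : ℤ) - m).toNat,
        (k * p₃ - m).toNat, k + 1, k, ?_, ?_, ?_⟩
      · rw [Int.toNat_of_nonneg hA']; push_cast; ring
      · rw [Int.toNat_of_nonneg hB']; push_cast; ring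
      · rw [Int.toNat_of_nonneg hC']; push_cast; ring
    · exact hnz m (by omega)
  · -- i = 2
    obtain ⟨-, hub⟩ := hmem
    replace hub : ∀ n : ℕ, 2 ≤ n →
        lle p₁ p₂ p₃ (a • lx₃ p₁ p₂ p₃) ((n : ℤ) • lw p₁ p₂ p₃ + lc p₁ p₂ p₃) := hub
    show lle p₁ p₂ p₃ 0 (((p₃ : ℤ) - a + j) • lw p₁ p₂ p₃) ∧
      ((p₃ : ℤ) - a + j) • lw p₁ p₂ p₃ ≠ 0
    set m : ℤ := (p₃ : ℤ) - a + j with hmdef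
    have h2 := hub 2 le_rfl
    rw [lwc, ax3, lle_iff_s9] at h2
    obtain ⟨A, B, C, s, t, e1, e2, e3⟩ := h2
    have hA : (0 : ℤ) ≤ A := Int.natCast_nonneg A
    have hB : (0 : ℤ) ≤ B := Int.natCast_nonneg B
    have hC : (0 : ℤ) ≤ C := Int.natCast_nonneg C
    push_cast at e1 e2 e3
    have hst : 1 ≤ s - t := by nlinarith
    have hs2 : s ≤ 2 := by
      have h1 : s * p₁ < 3 * p₁ := by linarith
      have := lt_of_mul_lt_mul_right h1 (show (0:ℤ) ≤ p₁ by linarith)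
      omega
    have hap : a + 2 ≤ (p₃ : ℤ) := by
      have hmul := mul_le_mul_of_nonneg_right (show t ≤ 1 by omega)
        (show (0:ℤ) ≤ p₃ by linarith)
      nlinarith
    have hm3 : 3 ≤ m := by omega
    have hmp : m ≤ (p₃ : ℤ) := by omega
    clear e1 e2 e3 hA hB hC hst hs2
    have hmt := hub m.toNat (by omega)
    rw [lwc, ax3, lle_iff_s9] at hmt
    obtain ⟨A, B, C, s, t, f1, f2, f3⟩ := hmt
    have hA : (0 : ℤ) ≤ A := Int.natCast_nonneg A
    have hB : (0 : ℤ) ≤ B := Int.natCast_nonneg B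
    have hC : (0 : ℤ) ≤ C := Int.natCast_nonneg C
    rw [Int.toNat_of_nonneg (by omega : (0:ℤ) ≤ m)] at f1 f2 f3
    have hs_le : s ≤ m := by
      have h1 : s * p₁ < (m + 1) * p₁ := by linarith
      have := lt_of_mul_lt_mul_right h1 (show (0:ℤ) ≤ p₁ by linarith)
      omega
    have ht2 : 2 ≤ t := by
      by_contra h
      push_neg at h
      have := mul_le_mul_of_nonneg_right (show t ≤ 1 by omega)
        (show (0:ℤ) ≤ p₃ by linarith)
      nlinarith
    have hp2pos : (0 : ℤ) < p₂ := by linarith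
    obtain ⟨k, hk⟩ : ∃ k : ℤ, k = -(-m / p₂) := ⟨_, rfl⟩
    have hk1 : m ≤ k * p₂ := by
      have h := Int.emod_nonneg (-m) (ne_of_gt hp2pos)
      have h' := Int.mul_ediv_add_emod (-m) p₂
      have h'' : k * p₂ = -(p₂ * (-m / p₂)) := by rw [hk]; ring
      linarith
    have hk2 : k ≤ s - t := by
      have h1 : (t - s) * p₂ ≤ -m := by linarith
      have h2 : ((t - s) * p₂) / p₂ ≤ (-m) / p₂ := Int.ediv_le_ediv hp2pos h1
      rw [Int.mul_ediv_cancel _ (ne_of_gt hp2pos)] at h2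
      linarith [hk.ge, hk.le]
    have hA' : 0 ≤ m * ((p₁ : ℤ) - 1) - (k + 1) * p₁ := by
      nlinarith [mul_le_mul_of_nonneg_right (show k + 1 ≤ s - 1 by linarith)
        (show (0:ℤ) ≤ p₁ by linarith)]
    have hB' : 0 ≤ k * p₂ - m := by linarith
    have hC' : 0 ≤ (p₃ : ℤ) - m := by omega
    constructor
    · rw [lw_smul, h0, lle_iff_s9]
      refine ⟨(m * ((p₁ : ℤ) - 1) - (k + 1) * p₁).toNat, (k * p₂ - m).toNat,
        ((p₃ : ℤ) - m).toNat, k + 1, 1, ?_, ?_, ?_⟩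
      · rw [Int.toNat_of_nonneg hA']; push_cast; ring
      · rw [Int.toNat_of_nonneg hB']; push_cast; ring
      · rw [Int.toNat_of_nonneg hC']; push_cast; ring
    · exact hnz m (by omega)
end

section
/- Let p1, p2, p3 ≥ 2 with a·xi ∈ S for some a > 0 (where S = { x ∈ L(p1,p2,p3) : 0 ≤ x ≤ n·w + c for all n ≥ 2 }). Then a ≤ pi − 2. -/
section

variable {p₁ p₂ p₃ : ℕ}

lemma exists_eq_of_mem_LRel {z : ℤ × ℤ × ℤ} (hz : z ∈ LRel p₁ p₂ p₃) :
    ∃ k₁ k₂ k₃ : ℤ, k₁ + k₂ + k₃ = 0 ∧ z = (p₁ * k₁, p₂ * k₂, p₃ * k₃) := by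
  induction hz using AddSubgroup.closure_induction with
  | mem g hg =>
    rcases hg with rfl | rfl
    · exact ⟨1, -1, 0, by ring, by simp⟩
    · exact ⟨0, 1, -1, by ring, by simp⟩
  | zero => exact ⟨0, 0, 0, by ring, by simp; rfl⟩
  | add x y _ _ hx hy =>
    obtain ⟨k₁, k₂, k₃, hk, rfl⟩ := hx
    obtain ⟨l₁, l₂, l₃, hl, rfl⟩ := hy
    exact ⟨k₁ + l₁, k₂ + l₂, k₃ + l₃, by linarith, by simp [mul_add]⟩
  | neg x _ hx =>
    obtain ⟨k₁, k₂, k₃, hk, rfl⟩ := hx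
    exact ⟨-k₁, -k₂, -k₃, by linarith, by simp⟩

lemma mk_eq (z : ℤ × ℤ × ℤ) :
    (z : LGrp p₁ p₂ p₃) = z.1 • lx₁ p₁ p₂ p₃ + z.2.1 • lx₂ p₁ p₂ p₃ + z.2.2 • lx₃ p₁ p₂ p₃ := by
  simp only [lx₁, lx₂, lx₃, ← QuotientAddGroup.mk_zsmul, ← QuotientAddGroup.mk_add]
  congr 1
  ext <;> simp

lemma lc_eq_p₂_smul_lx₂ : lc p₁ p₂ p₃ = (p₂ : ℤ) • lx₂ p₁ p₂ p₃ := by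
  rw [← sub_eq_zero, lc, lx₁, lx₂, ← QuotientAddGroup.mk_zsmul, ← QuotientAddGroup.mk_zsmul,
    ← QuotientAddGroup.mk_sub, QuotientAddGroup.eq_zero_iff]
  exact AddSubgroup.subset_closure (by simp)

lemma lc_eq_p₃_smul_lx₃ : lc p₁ p₂ p₃ = (p₃ : ℤ) • lx₃ p₁ p₂ p₃ := by
  rw [lc_eq_p₂_smul_lx₂, ← sub_eq_zero, lx₂, lx₃, ← QuotientAddGroup.mk_zsmul,
    ← QuotientAddGroup.mk_zsmul, ← QuotientAddGroup.mk_sub, QuotientAddGroup.eq_zero_iff]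
  exact AddSubgroup.subset_closure (by simp)

lemma two_smul_lw_add_lc :
    (2 : ℤ) • lw p₁ p₂ p₃ + lc p₁ p₂ p₃ =
      ((p₁ : ℤ) - 2) • lx₁ p₁ p₂ p₃ + ((p₂ : ℤ) - 2) • lx₂ p₁ p₂ p₃ +
        ((p₃ : ℤ) - 2) • lx₃ p₁ p₂ p₃ := by
  have h₁ : lc p₁ p₂ p₃ = (p₁ : ℤ) • lx₁ p₁ p₂ p₃ := rfl
  rw [lw]
  linear_combination (norm := module) h₁ + lc_eq_p₂_smul_lx₂ + lc_eq_p₃_smul_lx₃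

lemma nonneg_of_sub_sub_two_eq_mul {p n k : ℤ} (hp : 0 < p) (hn : 0 ≤ n)
    (h : n - (p - 2) = p * k) : 0 ≤ k := by
  have : 0 < p * (k + 1) := by linarith
  linarith [pos_of_mul_pos_right this hp.le]

lemma eq_sub_two_of_two_smul_lw_add_lc_eq (hp₁ : 0 < p₁) (hp₂ : 0 < p₂) (hp₃ : 0 < p₃)
    {n₁ n₂ n₃ : ℤ} (hn₁ : 0 ≤ n₁) (hn₂ : 0 ≤ n₂) (hn₃ : 0 ≤ n₃)
    (h : (2 : ℤ) • lw p₁ p₂ p₃ + lc p₁ p₂ p₃ =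
      n₁ • lx₁ p₁ p₂ p₃ + n₂ • lx₂ p₁ p₂ p₃ + n₃ • lx₃ p₁ p₂ p₃) :
    n₁ = p₁ - 2 ∧ n₂ = p₂ - 2 ∧ n₃ = p₃ - 2 := by
  rw [two_smul_lw_add_lc, ← mk_eq (n₁, n₂, n₃), ← mk_eq (_, _, _), QuotientAddGroup.eq,
    neg_add_eq_sub] at h
  obtain ⟨k₁, k₂, k₃, hk, hz⟩ := exists_eq_of_mem_LRel h
  simp only [Prod.ext_iff, Prod.fst_sub, Prod.snd_sub] at hz
  obtain ⟨hz₁, hz₂, hz₃⟩ := hz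
  have hk₁ := nonneg_of_sub_sub_two_eq_mul (by exact_mod_cast hp₁) hn₁ hz₁
  have hk₂ := nonneg_of_sub_sub_two_eq_mul (by exact_mod_cast hp₂) hn₂ hz₂
  have hk₃ := nonneg_of_sub_sub_two_eq_mul (by exact_mod_cast hp₃) hn₃ hz₃
  obtain ⟨rfl, rfl, rfl⟩ : k₁ = 0 ∧ k₂ = 0 ∧ k₃ = 0 := by omega
  refine ⟨?_, ?_, ?_⟩ <;> linarith

end

/-- If a·xᵢ ∈ S for some a > 0, then a ≤ pᵢ - 2. -/
theorem a_le_p_sub_two (p₁ p₂ p₃ : ℕ)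
    (hp₁ : 2 ≤ p₁) (hp₂ : 2 ≤ p₂) (hp₃ : 2 ≤ p₃)
    (i : Fin 3) (a : ℤ) (ha : 0 < a)
    (hmem : a • (![lx₁ p₁ p₂ p₃, lx₂ p₁ p₂ p₃, lx₃ p₁ p₂ p₃] i) ∈ lS p₁ p₂ p₃) :
    a ≤ ((![p₁, p₂, p₃] i : ℕ) : ℤ) - 2 := by
  obtain ⟨b₁, b₂, b₃, h⟩ := hmem.2 2 le_rfl
  rw [Nat.cast_ofNat] at h
  have hp : 0 < p₁ ∧ 0 < p₂ ∧ 0 < p₃ := by omega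
  fin_cases i <;> simp only [Fin.zero_eta, Fin.mk_one, Fin.reduceFinMk, Matrix.cons_val] at h ⊢
  · obtain ⟨h₁, -, -⟩ := eq_sub_two_of_two_smul_lw_add_lc_eq hp.1 hp.2.1 hp.2.2
      (n₁ := a + b₁) (n₂ := b₂) (n₃ := b₃)
      (by positivity) (by positivity) (by positivity) (h.trans (by module))
    omega
  · obtain ⟨-, h₂, -⟩ := eq_sub_two_of_two_smul_lw_add_lc_eq hp.1 hp.2.1 hp.2.2
      (n₁ := b₁) (n₂ := a + b₂) (n₃ := b₃)
      (by positivity) (by positivity) (by positivity) (h.trans (by module))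
    omega
  · obtain ⟨-, -, h₃⟩ := eq_sub_two_of_two_smul_lw_add_lc_eq hp.1 hp.2.1 hp.2.2
      (n₁ := b₁) (n₂ := b₂) (n₃ := a + b₃)
      (by positivity) (by positivity) (by positivity) (h.trans (by module))
    omega
end

section
/- The Coxeter polynomials of N_{15}(4) and N_{15}(6) coincide and equal (λ+1)(λ^{8} + λ^{4} + 1)(λ^{6} + 1), where the Coxeter polynomial of N_n(r) is the characteristic polynomial of Φ = −C^{-T}·C for the 0-1 band Cartan matrix C with C_{ij} = 1 iff i ≤ j ≤ i + r − 1. -/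
open Polynomial Matrix

/-- The Cartan matrix of the Nakayama algebra N_n(r): C i j = 1 iff i ≤ j ≤ i + r - 1. -/
def cartanN (n r : ℕ) : Matrix (Fin n) (Fin n) ℚ :=
  fun i j => if (i : ℕ) ≤ (j : ℕ) ∧ (j : ℕ) ≤ (i : ℕ) + (r - 1) then 1 else 0

/-- The Coxeter matrix Φ = -C^{-T}·C of N_n(r). -/
noncomputable def coxeterN (n r : ℕ) : Matrix (Fin n) (Fin n) ℚ :=
  -((cartanN n r)⁻¹)ᵀ * cartanN n r

/-- The Coxeter polynomial of N_n(r): the characteristic polynomial det(λ·I - Φ). -/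
noncomputable def coxeterPolyN (n r : ℕ) : Polynomial ℚ :=
  (coxeterN n r).charpoly

/-! The Coxeter matrix `Φ` of `N₁₅(4)`, and likewise that of `N₁₅(6)`, satisfies `Φ¹² = 1` and has
minimal polynomial `(λ + 1)(λ⁸ + λ⁴ + 1)(λ² + 1)`. Being semisimple, it is conjugate to the block
diagonal matrix `B` whose blocks are the companion matrices of `λ + 1`, `λ⁸ + λ⁴ + 1` and
`λ⁶ + 1`: the conjugating matrix `P` consists of the Krylov bases `v, Φ v, …` of three vectors
annihilated by these factors. The characteristic polynomial of `B` is the product of those of its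
blocks, and that of a companion matrix is the minimal polynomial of the root in `AdjoinRoot`.
The relation `Φ P = P B` is checked as `Cᵀ P B = -C P`, which avoids `C⁻¹`, and `P` is invertible
because `P Q = 6` for an integer matrix `Q`. -/

namespace Polynomial

variable {K : Type*} [Field K] {n : ℕ} (c : Fin n → K)

lemma monic_X_pow_add_sum_fin : (X ^ n + ∑ i : Fin n, C (c i) * X ^ (i : ℕ)).Monic :=
  monic_X_pow_add (degree_sum_fin_lt c)

lemma natDegree_X_pow_add_sum_fin :
    (X ^ n + ∑ i : Fin n, C (c i) * X ^ (i : ℕ)).natDegree = n := by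
  rw [natDegree_add_eq_left_of_degree_lt] <;> simp [degree_sum_fin_lt c]

lemma coeff_sum_fin_C_mul_X_pow (i : Fin n) :
    (∑ j : Fin n, C (c j) * X ^ (j : ℕ)).coeff i = c i := by
  simp [Fin.val_inj]

end Polynomial

namespace Matrix

/-- The companion matrix of `X ^ n + ∑ i, C (c i) * X ^ i`. -/
def companion {R : Type*} [Ring R] {n : ℕ} (c : Fin n → R) : Matrix (Fin n) (Fin n) R :=
  of fun i j => if (j : ℕ) + 1 = n then -c i else if (i : ℕ) = j + 1 then 1 else 0

lemma map_companion {R S : Type*} [Ring R] [Ring S] (f : R →+* S) {n : ℕ} (c : Fin n → R) :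
    (companion c).map f = companion (f ∘ c) := by
  ext i j
  simp only [companion, map_apply, of_apply, Function.comp_apply]
  split_ifs <;> simp

section CompanionCharpoly

variable {K : Type*} [Field K] {n : ℕ} (c : Fin n → K)

lemma companion_apply_eq_coeff_modByMonic (i j : Fin n) :
    companion c i j =
      (X ^ ((j : ℕ) + 1) %ₘ (X ^ n + ∑ i : Fin n, C (c i) * X ^ (i : ℕ))).coeff i := by
  have hp := monic_X_pow_add_sum_fin c
  have hdeg : (X ^ n + ∑ i : Fin n, C (c i) * X ^ (i : ℕ)).degree = n := by
    rw [degree_eq_natDegree hp.ne_zero, natDegree_X_pow_add_sum_fin]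
  simp only [companion, of_apply]
  split_ifs with hj hi
  · rw [hj, (div_modByMonic_unique 1 (-∑ i : Fin n, C (c i) * X ^ (i : ℕ)) hp
      ⟨by ring, by rw [degree_neg, hdeg]; exact degree_sum_fin_lt c⟩).2, coeff_neg,
      coeff_sum_fin_C_mul_X_pow]
  · rw [(modByMonic_eq_self_iff hp).2, coeff_X_pow, if_pos hi]
    rw [hdeg, degree_X_pow, Nat.cast_lt]; omega
  · rw [(modByMonic_eq_self_iff hp).2, coeff_X_pow, if_neg hi]
    rw [hdeg, degree_X_pow, Nat.cast_lt]; omega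

/-- The companion matrix is the matrix of multiplication by the root in the power basis of
`AdjoinRoot p`, so its characteristic polynomial is the minimal polynomial `p` of that root. -/
theorem charpoly_companion :
    (companion c).charpoly = X ^ n + ∑ i : Fin n, C (c i) * X ^ (i : ℕ) := by
  set p := X ^ n + ∑ i : Fin n, C (c i) * X ^ (i : ℕ)
  have hp : p.Monic := monic_X_pow_add_sum_fin c
  let pb := AdjoinRoot.powerBasis' hp
  let e : Fin pb.dim ≃ Fin n := finCongr (natDegree_X_pow_add_sum_fin c)
  have : companion c = reindex e e (Algebra.leftMulMatrix pb.basis pb.gen) := by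
    ext i j
    rw [reindex_apply, submatrix_apply, Algebra.leftMulMatrix_eq_repr_mul, PowerBasis.coe_basis,
      ← pow_succ', AdjoinRoot.powerBasis'_gen, ← AdjoinRoot.mk_X, ← map_pow,
      companion_apply_eq_coeff_modByMonic, ← AdjoinRoot.modByMonicHom_mk hp]
    rfl
  rw [this, charpoly_reindex, charpoly_leftMulMatrix, AdjoinRoot.powerBasis'_gen,
    AdjoinRoot.minpoly_root hp.ne_zero, hp.leadingCoeff, inv_one, C_1, mul_one]

end CompanionCharpoly

section BlockSum

variable {m n : ℕ}

def blockSum {R : Type*} [Zero R] (A : Matrix (Fin m) (Fin m) R) (B : Matrix (Fin n) (Fin n) R) :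
    Matrix (Fin (m + n)) (Fin (m + n)) R :=
  reindex finSumFinEquiv finSumFinEquiv (fromBlocks A 0 0 B)

lemma map_blockSum {R S : Type*} [Ring R] [Ring S] (f : R →+* S) (A : Matrix (Fin m) (Fin m) R)
    (B : Matrix (Fin n) (Fin n) R) : (blockSum A B).map f = blockSum (A.map f) (B.map f) := by
  simp [blockSum, ← submatrix_map, fromBlocks_map]

lemma charpoly_blockSum {R : Type*} [CommRing R] (A : Matrix (Fin m) (Fin m) R)
    (B : Matrix (Fin n) (Fin n) R) : (blockSum A B).charpoly = A.charpoly * B.charpoly := by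
  rw [blockSum, charpoly_reindex, charpoly_fromBlocks_zero₁₂]

end BlockSum

theorem charpoly_eq_of_mul_eq_mul {K n : Type*} [Field K] [Fintype n] [DecidableEq n]
    {A B P : Matrix n n K} (hP : IsUnit P.det) (h : A * P = P * B) :
    A.charpoly = B.charpoly := by
  have hA : A = P * B * P⁻¹ := by rw [← h, mul_nonsing_inv_cancel_right _ _ hP]
  rw [hA, ← charpoly_units_conj ((isUnit_iff_isUnit_det P).2 hP).unit B]
  rfl

end Matrix

section Nakayama

/-- `cartanN` over any ring; over `ℤ` it can be evaluated by `decide`. -/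
def cartan (R : Type*) [Zero R] [One R] (n r : ℕ) : Matrix (Fin n) (Fin n) R :=
  of fun i j => if (i : ℕ) ≤ (j : ℕ) ∧ (j : ℕ) ≤ (i : ℕ) + (r - 1) then 1 else 0

variable {n r : ℕ}

lemma map_cartan {R S : Type*} [Ring R] [Ring S] (f : R →+* S) :
    (cartan R n r).map f = cartan S n r := by
  ext i j
  simp only [cartan, map_apply, of_apply]
  split_ifs <;> simp

lemma det_cartanN : (cartanN n r).det = 1 := by
  have : (cartanN n r).IsUpperTriangular := fun i j (hij : j < i) => if_neg (by omega)
  rw [det_of_isUpperTriangular this]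
  exact Finset.prod_eq_one fun i _ => if_pos (by omega)

theorem coxeterPolyN_eq_charpoly {P B : Matrix (Fin n) (Fin n) ℚ} (hP : IsUnit P.det)
    (h : (cartanN n r)ᵀ * P * B = -(cartanN n r * P)) : coxeterPolyN n r = B.charpoly := by
  have hCt : IsUnit (cartanN n r)ᵀ.det := by rw [det_transpose, det_cartanN]; exact isUnit_one
  refine charpoly_eq_of_mul_eq_mul hP ?_
  rw [coxeterN, transpose_nonsing_inv, neg_mul, neg_mul, mul_assoc, ← mul_neg, ← h,
    ← mul_assoc, nonsing_inv_mul_cancel_left _ _ hCt]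

theorem coxeterPolyN_eq_charpoly_of_int {P Q B : Matrix (Fin n) (Fin n) ℤ} {d : ℤ} (hd : d ≠ 0)
    (hPQ : P * Q = d • 1) (h : (cartan ℤ n r)ᵀ * P * B = -(cartan ℤ n r * P)) :
    coxeterPolyN n r = (B.map (Int.castRingHom ℚ)).charpoly := by
  set f := Int.castRingHom ℚ
  have hP : IsUnit (P.map f).det := by
    have hdet : (P.map f).det * (Q.map f).det = (d : ℚ) ^ n := by
      rw [← det_mul, ← Matrix.map_mul, hPQ, smul_one_eq_diagonal, diagonal_map (map_zero f),
        det_diagonal]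
      simp [f]
    exact isUnit_iff_ne_zero.2 (left_ne_zero_of_mul (hdet ▸ pow_ne_zero _ (by exact_mod_cast hd)))
  refine coxeterPolyN_eq_charpoly hP ?_
  have hC : cartanN n r = (cartan ℤ n r).map f := (map_cartan f).symm
  rw [hC, ← transpose_map, ← Matrix.map_mul, ← Matrix.map_mul, ← Matrix.map_mul, h,
    Matrix.map_neg _ (map_neg f)]

end Nakayama

def coxeterNormalForm (R : Type*) [Ring R] : Matrix (Fin (1 + 8 + 6)) (Fin (1 + 8 + 6)) R :=
  blockSum (blockSum (companion ![1]) (companion ![1, 0, 0, 0, 1, 0, 0, 0]))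
    (companion ![1, 0, 0, 0, 0, 0])

lemma charpoly_coxeterNormalForm :
    ((coxeterNormalForm ℤ).map (Int.castRingHom ℚ)).charpoly =
      (X + 1) * (X ^ 8 + X ^ 4 + 1) * (X ^ 6 + 1) := by
  simp only [coxeterNormalForm, map_blockSum, charpoly_blockSum, map_companion, charpoly_companion]
  simp [Fin.sum_univ_succ, -mul_eq_mul_left_iff, -mul_eq_mul_right_iff]
  ring

/-- The columns are `v`; `u, Φ u, …, Φ⁷ u`; `w, Φ w, …, Φ⁵ w` for the Coxeter matrix `Φ` of
`N₁₅(4)`, where `(Φ + 1) v = 0`, `(Φ⁸ + Φ⁴ + 1) u = 0` and `(Φ⁶ + 1) w = 0`. -/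
def krylovBasis₄ : Matrix (Fin 15) (Fin 15) ℤ :=
  !![-1, 0, 0, 0, 0, 0, -1, 0, 0, 0, 0, 0, -1, 0, 0;
     1, 0, 0, 0, 0, 0, 1, 0, 0, 0, 0, 1, 0, 0, 0;
     -1, 0, 0, 0, 1, 0, 0, 0, 0, 0, 0, 0, 1, 0, 0;
     0, 0, 0, 0, -1, 1, 0, 0, 0, 0, 0, 0, 0, 0, 0;
     0, 0, 0, 0, 0, -1, -1, 0, 0, 0, -1, 0, -1, 0, 0;
     0, 0, 0, -1, 0, 0, 1, 0, 0, 0, 0, 0, 0, 0, 0;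
     -1, 0, 0, 1, 0, 0, 0, 0, 1, 0, 0, 0, 1, 0, 0;
     1, 0, 0, 0, 0, 1, 0, 0, -1, 1, 0, 0, 0, 0, 0;
     -1, 0, 1, 0, 0, -1, -1, 0, 0, 0, 0, 0, -1, 0, 0;
     0, 0, -1, 0, 0, 0, 1, -1, 0, 0, 0, 0, 0, 0, 0;
     0, 0, 0, 0, 0, 0, 0, 1, 1, 0, 0, 0, 1, 0, 1;
     0, -1, 0, 0, 0, 1, 0, 0, -1, 0, 0, 0, 0, 0, 0;
     -1, 1, 0, 0, 0, -1, 0, 0, 0, 0, 0, 0, -1, 0, 0;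
     1, 0, 0, 0, 0, 0, 0, -1, 0, 0, 0, 0, 0, -1, 0;
     -1, 0, 0, 0, 0, 0, 0, 1, 0, 0, 0, 0, 1, 0, 0]

def sixKrylovBasisInv₄ : Matrix (Fin 15) (Fin 15) ℤ :=
  !![-1, 0, -1, -1, 0, -1, -1, 0, -1, -1, 0, -1, -1, 0, -1;
     -2, 0, 4, 4, 0, -2, -2, 0, -2, -2, 0, -2, 4, 0, -2;
     -4, 0, 2, 2, 0, 2, 2, 0, 2, -4, 0, 2, 2, 0, -4;
     -2, 0, -2, -2, 0, -2, 4, 0, -2, -2, 0, 4, 4, 0, -2;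
     2, 0, 2, -4, 0, 2, 2, 0, -4, -4, 0, 2, 2, 0, -4;
     2, 0, 2, 2, 0, 2, 2, 0, -4, -4, 0, 2, 2, 0, -4;
     -2, 0, -2, -2, 0, 4, 4, 0, -2, -2, 0, 4, 4, 0, -2;
     2, 0, -4, -4, 0, 2, 2, 0, -4, -4, 0, 2, 2, 0, 2;
     4, 0, -2, -2, 0, 4, 4, 0, -2, -2, 0, -2, -2, 0, -2;
     3, 0, -3, -3, 0, 3, 3, 6, 3, 3, 0, -3, -3, 0, 3;
     3, 0, -3, -3, -6, -3, -3, 0, 3, 3, 0, -3, -3, 0, 3;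
     3, 6, 3, 3, 0, -3, -3, 0, 3, 3, 0, -3, -3, 0, 3;
     -3, 0, 3, 3, 0, -3, -3, 0, 3, 3, 0, -3, -3, 0, 3;
     -3, 0, 3, 3, 0, -3, -3, 0, 3, 3, 0, -3, -3, -6, -3;
     -3, 0, 3, 3, 0, -3, -3, 0, 3, 3, 6, 3, 3, 0, -3]

/-- As `krylovBasis₄`, for `N₁₅(6)`. -/
def krylovBasis₆ : Matrix (Fin 15) (Fin 15) ℤ :=
  !![-1, 0, 0, 0, 1, 0, 0, 0, -1, 1, 0, 0, 0, 0, 0;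
     1, 0, 0, -1, 0, 0, 0, 0, 0, -1, 0, 0, 0, 0, 0;
     -1, 0, 0, 0, -1, 0, 0, 0, 0, 0, 0, -1, 0, 0, 0;
     1, 0, 0, 0, 0, 0, 0, 1, 0, 0, 0, 1, 0, 0, 0;
     -1, 0, 0, 0, 0, 0, 0, 0, 1, 0, 0, 0, 0, 1, 0;
     0, 0, 0, 0, 0, 0, 0, 0, 0, 0, 0, 0, 0, -1, 1;
     0, 0, 1, 0, 1, 0, 0, 0, -1, 1, 0, 0, 0, 0, -1;
     0, 0, 0, 0, 0, 0, 0, 0, 0, -1, 1, 0, 0, 0, 0;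
     0, 0, 0, 0, -1, 0, -1, 0, 0, 0, -1, -1, 0, 0, 0;
     0, 0, 0, 0, 0, 0, 0, 0, 0, 0, 0, 1, -1, 0, 0;
     -1, 0, 0, 0, 0, 0, 0, 0, 1, 0, 0, 0, 1, 0, 0;
     1, -1, 0, 0, 0, 0, 0, 0, 0, 0, 0, 0, 0, 0, 1;
     -1, 0, 0, 0, 1, 0, 0, 0, -1, 0, 0, 0, 0, 0, -1;
     1, 0, 0, 0, 0, 1, 0, 0, 0, 0, 1, 0, 0, 0, 0;
     -1, 0, 0, 0, -1, 0, 0, 0, 0, 0, -1, 0, 0, 0, 0]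

def sixKrylovBasisInv₆ : Matrix (Fin 15) (Fin 15) ℤ :=
  !![-1, 0, -1, 0, -1, -1, 0, -1, 0, -1, -1, 0, -1, 0, -1;
     2, 0, -4, 0, 2, 2, 0, 2, 0, -4, -4, -6, -4, 0, 2;
     -2, 0, -2, 0, 4, 4, 6, 4, 0, -2, -2, 0, -2, 0, 4;
     -4, -6, -4, 0, 2, 2, 0, 2, 0, -4, -4, 0, 2, 0, 2;
     -2, 0, -2, 0, 4, 4, 0, -2, 0, -2, -2, 0, 4, 0, -2;
     -2, 0, -2, 0, 4, 4, 0, -2, 0, -2, -2, 0, 4, 6, 4;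
     -4, 0, 2, 0, 2, 2, 0, -4, -6, -4, -4, 0, 2, 0, 2;
     -2, 0, 4, 6, 4, 4, 0, -2, 0, -2, -2, 0, 4, 0, -2;
     -4, 0, 2, 0, 2, 2, 0, -4, 0, 2, 2, 0, 2, 0, -4;
     3, 0, 3, 0, -3, -3, 0, -3, 0, 3, 3, 0, -3, 0, -3;
     3, 0, 3, 0, -3, -3, 0, 3, 0, 3, 3, 0, -3, 0, -3;
     3, 0, -3, 0, -3, -3, 0, 3, 0, 3, 3, 0, -3, 0, 3;
     3, 0, -3, 0, -3, -3, 0, 3, 0, -3, 3, 0, -3, 0, 3;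
     3, 0, -3, 0, 3, -3, 0, 3, 0, -3, -3, 0, -3, 0, 3;
     3, 0, -3, 0, 3, 3, 0, 3, 0, -3, -3, 0, -3, 0, 3]

lemma coxeterPolyN_15_4 :
    coxeterPolyN 15 4 = ((coxeterNormalForm ℤ).map (Int.castRingHom ℚ)).charpoly :=
  coxeterPolyN_eq_charpoly_of_int (P := krylovBasis₄) (Q := sixKrylovBasisInv₄) (d := 6)
    (by norm_num) (by decide) (by decide)

lemma coxeterPolyN_15_6 :
    coxeterPolyN 15 6 = ((coxeterNormalForm ℤ).map (Int.castRingHom ℚ)).charpoly :=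
  coxeterPolyN_eq_charpoly_of_int (P := krylovBasis₆) (Q := sixKrylovBasisInv₆) (d := 6)
    (by norm_num) (by decide) (by decide)

/-- The Coxeter polynomials of N₁₅(4) and N₁₅(6) coincide and equal
(λ+1)(λ⁸+λ⁴+1)(λ⁶+1). -/
theorem coxeterPoly_15_4_and_15_6 :
    coxeterPolyN 15 4 = (X + 1) * (X ^ 8 + X ^ 4 + 1) * (X ^ 6 + 1) ∧
    coxeterPolyN 15 6 = (X + 1) * (X ^ 8 + X ^ 4 + 1) * (X ^ 6 + 1) :=
  ⟨coxeterPolyN_15_4.trans charpoly_coxeterNormalForm,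
    coxeterPolyN_15_6.trans charpoly_coxeterNormalForm⟩
end

section
/- Let D be a Hom-finite triangulated category over a field k with Serre functor S (i.e., Hom(X,Y) ≅ Hom(Y, S X)* naturally). Let X ∈ D and U = ⊕_{k=0}^{m} S^k X for some m ≥ 0. Then Hom(U, U[n]) = 0 for all n ≠ 0 if and only if Hom(X, S^k X[n]) = 0 for all 1 ≤ k ≤ m + 1 and all n ≠ 0. -/
open CategoryTheory CategoryTheory.Limits CategoryTheory.Pretriangulated

private lemma dual_sub {k : Type} [Field k] {V W : Type*} [AddCommGroup V] [Module k V]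
    [AddCommGroup W] [Module k W] (e : V ≃ₗ[k] Module.Dual k W) :
    Subsingleton V ↔ Subsingleton W := by
  constructor
  · intro hV
    refine subsingleton_of_forall_eq 0 fun w => ?_
    rw [← Module.forall_dual_apply_eq_zero_iff k w]
    intro φ
    have : φ = e 0 := by
      rw [← e.apply_symm_apply φ]; congr 1; exact Subsingleton.elim _ _
    simp [this]
  · intro hW
    refine subsingleton_of_forall_eq 0 fun v => ?_
    apply e.injective
    apply LinearMap.ext
    intro w
    rw [Subsingleton.elim w 0]
    simp

section Main

variable {k : Type} [Field k] {D : Type} [Category D] [Preadditive D] [Linear k D]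
  [HasShift D ℤ] [∀ n : ℤ, (shiftFunctor D n).Additive]
  (S : D ≌ D)

private lemma hom_sub_iff {A B : D} : Subsingleton (A ⟶ B) ↔ ∀ f : A ⟶ B, f = 0 :=
  ⟨fun _ f => Subsingleton.elim f 0, fun h => subsingleton_of_forall_eq 0 h⟩

private lemma serre_flip
    (hSerre : ∀ A B : D, Nonempty ((A ⟶ B) ≃ₗ[k] Module.Dual k (B ⟶ S.functor.obj A)))
    (A B : D) (n : ℤ) :
    Subsingleton (A ⟶ (shiftFunctor D n).obj B) ↔
    Subsingleton (B ⟶ (shiftFunctor D (-n)).obj (S.functor.obj A)) := by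
  obtain ⟨e⟩ := hSerre A ((shiftFunctor D n).obj B)
  have h2 : ((shiftFunctor D n).obj B ⟶ S.functor.obj A) ≃
      (B ⟶ (shiftFunctor D (-n)).obj (S.functor.obj A)) :=
    (shiftEquiv D n).toAdjunction.homEquiv B (S.functor.obj A)
  exact (dual_sub e).trans h2.subsingleton_congr

private lemma T_raise
    (hSerre : ∀ A B : D, Nonempty ((A ⟶ B) ≃ₗ[k] Module.Dual k (B ⟶ S.functor.obj A)))
    (X : D) (i j : ℕ) (n : ℤ) :
    Subsingleton ((S.functor.obj)^[i] X ⟶ (shiftFunctor D n).obj ((S.functor.obj)^[j] X)) ↔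
    Subsingleton ((S.functor.obj)^[i+1] X ⟶
      (shiftFunctor D n).obj ((S.functor.obj)^[j+1] X)) := by
  rw [serre_flip S hSerre, serre_flip S hSerre, neg_neg,
    Function.iterate_succ_apply' S.functor.obj i X,
    Function.iterate_succ_apply' S.functor.obj j X]

private lemma T_lower
    (hSerre : ∀ A B : D, Nonempty ((A ⟶ B) ≃ₗ[k] Module.Dual k (B ⟶ S.functor.obj A)))
    (X : D) (d : ℕ) (n : ℤ) (i : ℕ) :
    Subsingleton ((S.functor.obj)^[i] X ⟶ (shiftFunctor D n).obj ((S.functor.obj)^[d+i] X)) ↔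
    Subsingleton (X ⟶ (shiftFunctor D n).obj ((S.functor.obj)^[d] X)) := by
  induction i with
  | zero => rfl
  | succ i ih =>
      show Subsingleton ((S.functor.obj)^[i+1] X ⟶
        (shiftFunctor D n).obj ((S.functor.obj)^[(d+i)+1] X)) ↔ _
      rw [← T_raise S hSerre X i (d+i) n, ih]

end Main

section Bip

variable {D : Type} [Category D] [Preadditive D] [HasZeroObject D]
  [HasShift D ℤ] [∀ n : ℤ, (shiftFunctor D n).Additive] [HasFiniteBiproducts D]

private lemma bip_zero {J : Type} [Fintype J] (obj : J → D) (n : ℤ)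
    (h : ∀ i j : J, ∀ g : obj i ⟶ (shiftFunctor D n).obj (obj j), g = 0)
    (f : (⨁ obj) ⟶ (shiftFunctor D n).obj (⨁ obj)) : f = 0 := by
  apply biproduct.hom_ext'
  intro i
  rw [comp_zero]
  calc biproduct.ι obj i ≫ f
      = (biproduct.ι obj i ≫ f) ≫ (shiftFunctor D n).map
          (∑ j : J, biproduct.π obj j ≫ biproduct.ι obj j) := by
        rw [biproduct.total, CategoryTheory.Functor.map_id, Category.comp_id]
    _ = ∑ j : J, (biproduct.ι obj i ≫ f ≫ (shiftFunctor D n).map (biproduct.π obj j)) ≫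
          (shiftFunctor D n).map (biproduct.ι obj j) := by
        rw [Functor.map_sum, Preadditive.comp_sum]
        apply Finset.sum_congr rfl
        intro j _
        simp [Functor.map_comp]
    _ = 0 := by
        apply Finset.sum_eq_zero
        intro j _
        rw [h i j (biproduct.ι obj i ≫ f ≫ (shiftFunctor D n).map (biproduct.π obj j)),
          zero_comp]

private lemma bip_extract {J : Type} [Fintype J] (obj : J → D) (n : ℤ)
    (h : ∀ f : (⨁ obj) ⟶ (shiftFunctor D n).obj (⨁ obj), f = 0) (i j : J)
    (g : obj i ⟶ (shiftFunctor D n).obj (obj j)) : g = 0 := by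
  have h2 := h (biproduct.π obj i ≫ g ≫ (shiftFunctor D n).map (biproduct.ι obj j))
  have h3 : g = biproduct.ι obj i ≫
      (biproduct.π obj i ≫ g ≫ (shiftFunctor D n).map (biproduct.ι obj j)) ≫
      (shiftFunctor D n).map (biproduct.π obj j) := by
    simp [← Functor.map_comp]
  rw [h3, h2, zero_comp, comp_zero]

end Bip

/-- Lemma A.1: for a Hom-finite triangulated category D over a field k with Serre
functor S, and U = ⊕_{k=0}^m Sᵏ X, the object U is extension-free (Hom(U,U[n]) = 0
for all n ≠ 0) iff Hom(X, Sᵏ X[n]) = 0 for all 1 ≤ k ≤ m+1 and all n ≠ 0. -/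
theorem extension_free_serre_orbit
    (k : Type) [Field k]
    (D : Type) [Category D] [Preadditive D] [Linear k D]
    [HasZeroObject D] [HasShift D ℤ] [∀ n : ℤ, (shiftFunctor D n).Additive]
    [Pretriangulated D] [HasFiniteBiproducts D]
    [∀ A B : D, FiniteDimensional k (A ⟶ B)]
    (S : D ≌ D)
    (hSerre : ∀ A B : D, Nonempty ((A ⟶ B) ≃ₗ[k] Module.Dual k (B ⟶ S.functor.obj A)))
    (X : D) (m : ℕ) :
    (∀ n : ℤ, n ≠ 0 →
      ∀ f : (⨁ fun i : Fin (m + 1) => (S.functor.obj)^[(i : ℕ)] X) ⟶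
        (shiftFunctor D n).obj (⨁ fun i : Fin (m + 1) => (S.functor.obj)^[(i : ℕ)] X),
        f = 0) ↔
    (∀ j : ℕ, 1 ≤ j → j ≤ m + 1 → ∀ n : ℤ, n ≠ 0 →
      ∀ f : X ⟶ (shiftFunctor D n).obj ((S.functor.obj)^[j] X), f = 0) := by
  set obj : Fin (m+1) → D := fun i => (S.functor.obj)^[(i : ℕ)] X with hobj
  constructor
  · intro hU j hj1 hj2 n hn
    rcases Nat.lt_or_ge j (m+1) with hlt | hge
    · exact fun f => bip_extract obj n (hU n hn) ⟨0, Nat.succ_pos m⟩ ⟨j, hlt⟩ f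
    · have hj : j = m + 1 := le_antisymm hj2 hge
      subst hj
      rw [← hom_sub_iff]
      have key := serre_flip S hSerre ((S.functor.obj)^[m] X) X (-n)
      rw [neg_neg, ← Function.iterate_succ_apply' S.functor.obj m X] at key
      rw [← key, hom_sub_iff]
      exact fun g => bip_extract obj (-n) (hU (-n) (neg_ne_zero.mpr hn))
        ⟨m, Nat.lt_succ_self m⟩ ⟨0, Nat.succ_pos m⟩ g
  · intro hQ n hn
    intro f
    apply bip_zero obj n
    intro i j
    rw [← hom_sub_iff]
    show Subsingleton ((S.functor.obj)^[(i:ℕ)] X ⟶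
      (shiftFunctor D n).obj ((S.functor.obj)^[(j:ℕ)] X))
    rcases le_or_gt (i : ℕ) (j : ℕ) with hij | hij
    · obtain ⟨d, hd⟩ : ∃ d : ℕ, (j : ℕ) = d + (i : ℕ) := ⟨(j:ℕ) - (i:ℕ), by omega⟩
      rw [hd, T_lower S hSerre X d n i]
      rcases Nat.eq_zero_or_pos d with h0 | hpos
      · subst h0
        show Subsingleton (X ⟶ (shiftFunctor D n).obj X)
        have key := serre_flip S hSerre X X n
        rw [key, hom_sub_iff]
        exact hQ 1 le_rfl (by omega) (-n) (neg_ne_zero.mpr hn)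
      · rw [hom_sub_iff]
        exact hQ d hpos (by omega) n hn
    · have key := serre_flip S hSerre ((S.functor.obj)^[(i:ℕ)] X) ((S.functor.obj)^[(j:ℕ)] X) n
      rw [← Function.iterate_succ_apply' S.functor.obj (i:ℕ) X,
        Nat.succ_eq_add_one] at key
      rw [key]
      obtain ⟨d, hd⟩ : ∃ d : ℕ, (i : ℕ) + 1 = d + (j : ℕ) := ⟨(i:ℕ) + 1 - (j:ℕ), by omega⟩
      rw [hd, T_lower S hSerre X d (-n) (j:ℕ), hom_sub_iff]
      exact hQ d (by omega) (by omega) (-n) (neg_ne_zero.mpr hn)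
end

section
/- Let D be a Hom-finite triangulated category over a field k with Serre functor S. Let X, Y ∈ D, U = ⊕_{k=0}^{m} S^k X and V = ⊕_{k=0}^{r} S^k Y with m, r ≥ 0, and suppose Hom(U,U[n]) = 0 and Hom(V,V[n]) = 0 for all n ≠ 0. Then Hom(U ⊕ V, (U ⊕ V)[n]) = 0 for all n ≠ 0 if and only if Hom(X, S^k Y[n]) = 0 for all −m ≤ k ≤ r + 1 and all n ≠ 0. -/
open CategoryTheory CategoryTheory.Limits CategoryTheory.Pretriangulated

/-- Integer powers of an (auto)equivalence S, applied to objects: Sᶻ A. -/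
def equivPowObj {D : Type} [Category D] (S : D ≌ D) (z : ℤ) (A : D) : D :=
  if 0 ≤ z then (S.functor.obj)^[z.toNat] A else (S.inverse.obj)^[(-z).toNat] A

/-!
`Hom(A, B) = 0` is expressed as `Subsingleton (A ⟶ B)`. Hom commutes with finite biproducts and
the diagonal blocks vanish by hypothesis, so `U ⊕ V` is extension-free iff, for all `n ≠ 0`,
`Hom(Sⁱ X, Sʲ Y[n]) = 0` and `Hom(Sʲ Y, Sⁱ X[n]) = 0` for `i ≤ m`, `j ≤ r`. Serre duality used twice shows that vanishing
of `Hom(A, B[n])` is invariant under applying `S` to both arguments, although `S` is not assumed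
to commute with shifts. So the first group is `Hom(X, S^{j-i} Y[n]) = 0`, and the second, after
one more application of Serre duality, is `Hom(X, S^{j+1-i} Y[-n]) = 0`. The exponents `j - i`
and `j + 1 - i` together range exactly over `[-m, r + 1]`.
-/

namespace CategoryTheory

variable {C : Type*} [Category C]

lemma subsingleton_hom_congr {A A' B B' : C} (eA : A ≅ A') (eB : B ≅ B') :
    Subsingleton (A ⟶ B) ↔ Subsingleton (A' ⟶ B') :=
  (eA.homCongr eB).subsingleton_congr

section Shift

variable [HasShift C ℤ]

lemma subsingleton_shift_hom_iff (n : ℤ) (A B : C) :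
    Subsingleton (A⟦n⟧ ⟶ B) ↔ Subsingleton (A ⟶ B⟦-n⟧) :=
  ((shiftEquiv C n).toAdjunction.homEquiv A B).subsingleton_congr

lemma subsingleton_hom_shift_iff (n : ℤ) (A B : C) :
    Subsingleton (A ⟶ B⟦n⟧) ↔ Subsingleton (A⟦-n⟧ ⟶ B) :=
  ((shiftEquiv C n).symm.toAdjunction.homEquiv A B).subsingleton_congr.symm

end Shift

section Biproducts

variable [Preadditive C]

lemma subsingleton_biprod_hom_iff (A B T : C) [HasBinaryBiproduct A B] :
    Subsingleton (A ⊞ B ⟶ T) ↔ Subsingleton (A ⟶ T) ∧ Subsingleton (B ⟶ T) := by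
  refine ⟨fun _ => ⟨?_, ?_⟩, fun ⟨_, _⟩ => ⟨fun f g => biprod.hom_ext' _ _
    (Subsingleton.elim _ _) (Subsingleton.elim _ _)⟩⟩
  · exact Function.Surjective.subsingleton (f := fun h : A ⊞ B ⟶ T => biprod.inl ≫ h)
      fun g => ⟨biprod.desc g 0, biprod.inl_desc _ _⟩
  · exact Function.Surjective.subsingleton (f := fun h : A ⊞ B ⟶ T => biprod.inr ≫ h)
      fun g => ⟨biprod.desc 0 g, biprod.inr_desc _ _⟩

lemma subsingleton_hom_biprod_iff (T A B : C) [HasBinaryBiproduct A B] :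
    Subsingleton (T ⟶ A ⊞ B) ↔ Subsingleton (T ⟶ A) ∧ Subsingleton (T ⟶ B) := by
  refine ⟨fun _ => ⟨?_, ?_⟩, fun ⟨_, _⟩ => ⟨fun f g => biprod.hom_ext _ _
    (Subsingleton.elim _ _) (Subsingleton.elim _ _)⟩⟩
  · exact Function.Surjective.subsingleton (f := fun h : T ⟶ A ⊞ B => h ≫ biprod.fst)
      fun g => ⟨biprod.lift g 0, biprod.lift_fst _ _⟩
  · exact Function.Surjective.subsingleton (f := fun h : T ⟶ A ⊞ B => h ≫ biprod.snd)
      fun g => ⟨biprod.lift 0 g, biprod.lift_snd _ _⟩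

lemma subsingleton_biproduct_hom_iff {ι : Type*} (f : ι → C) [HasBiproduct f] (T : C) :
    Subsingleton (⨁ f ⟶ T) ↔ ∀ i, Subsingleton (f i ⟶ T) := by
  classical
  refine ⟨fun _ i => ?_,
    fun _ => ⟨fun g h => biproduct.hom_ext' _ _ fun _ => Subsingleton.elim _ _⟩⟩
  exact Function.Surjective.subsingleton (f := (biproduct.ι f i ≫ ·))
    fun g => ⟨biproduct.desc (Pi.single i g), by simp⟩

lemma subsingleton_hom_biproduct_iff {ι : Type*} (T : C) (f : ι → C) [HasBiproduct f] :
    Subsingleton (T ⟶ ⨁ f) ↔ ∀ i, Subsingleton (T ⟶ f i) := by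
  classical
  refine ⟨fun _ i => ?_,
    fun _ => ⟨fun g h => biproduct.hom_ext _ _ fun _ => Subsingleton.elim _ _⟩⟩
  exact Function.Surjective.subsingleton (f := (· ≫ biproduct.π f i))
    fun g => ⟨biproduct.lift (Pi.single i g), by simp⟩

variable (F : C ⥤ C) [F.Additive]

lemma subsingleton_biprod_hom_map_biprod_iff [HasBinaryBiproducts C] (U V : C) :
    Subsingleton (U ⊞ V ⟶ F.obj (U ⊞ V)) ↔
      (Subsingleton (U ⟶ F.obj U) ∧ Subsingleton (U ⟶ F.obj V)) ∧
        (Subsingleton (V ⟶ F.obj U) ∧ Subsingleton (V ⟶ F.obj V)) := by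
  have := preservesBinaryBiproducts_of_preservesBiproducts F
  rw [subsingleton_hom_congr (Iso.refl _) (F.mapBiprod U V), subsingleton_biprod_hom_iff,
    subsingleton_hom_biprod_iff, subsingleton_hom_biprod_iff]

lemma subsingleton_biproduct_hom_map_biproduct_iff [HasFiniteBiproducts C] {ι κ : Type}
    [Finite ι] [Finite κ] (f : ι → C) (g : κ → C) :
    Subsingleton (⨁ f ⟶ F.obj (⨁ g)) ↔ ∀ i j, Subsingleton (f i ⟶ F.obj (g j)) := by
  rw [subsingleton_hom_congr (Iso.refl _) (F.mapBiproduct g), subsingleton_biproduct_hom_iff]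
  simp only [subsingleton_hom_biproduct_iff, Function.comp_apply]

end Biproducts

def HasSerreDuality (k : Type*) [Field k] [Preadditive C] [Linear k C] (S : C ≌ C) : Prop :=
  ∀ A B : C, Nonempty ((A ⟶ B) ≃ₗ[k] Module.Dual k (B ⟶ S.functor.obj A))

namespace HasSerreDuality

variable {k : Type*} [Field k] [Preadditive C] [Linear k C] {S : C ≌ C}
  (hS : HasSerreDuality k S)
include hS

lemma subsingleton_hom_iff (A B : C) :
    Subsingleton (A ⟶ B) ↔ Subsingleton (B ⟶ S.functor.obj A) :=
  let ⟨e⟩ := hS A B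
  e.toEquiv.subsingleton_congr.trans (Module.subsingleton_dual_iff k)

variable [HasShift C ℤ]

lemma subsingleton_hom_shift_iff_swap (n : ℤ) (A B : C) :
    Subsingleton (A ⟶ B⟦n⟧) ↔ Subsingleton (B ⟶ (S.functor.obj A)⟦-n⟧) :=
  (hS.subsingleton_hom_iff _ _).trans (subsingleton_shift_hom_iff _ _ _)

lemma subsingleton_hom_shift_iff_functor (n : ℤ) (A B : C) :
    Subsingleton (A ⟶ B⟦n⟧) ↔ Subsingleton (S.functor.obj A ⟶ (S.functor.obj B)⟦n⟧) :=
  (hS.subsingleton_hom_shift_iff_swap n A B).trans <|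
    (hS.subsingleton_hom_iff _ _).trans (subsingleton_hom_shift_iff _ _ _).symm

lemma subsingleton_hom_shift_iff_iterate (n : ℤ) (t : ℕ) (A B : C) :
    Subsingleton (A ⟶ B⟦n⟧) ↔
      Subsingleton ((S.functor.obj)^[t] A ⟶ ((S.functor.obj)^[t] B)⟦n⟧) := by
  induction t with
  | zero => rfl
  | succ t ih =>
    rw [ih, Function.iterate_succ_apply', Function.iterate_succ_apply']
    exact hS.subsingleton_hom_shift_iff_functor n _ _

lemma subsingleton_functor_hom_shift_iff (n : ℤ) (A B : C) :
    Subsingleton (S.functor.obj A ⟶ B⟦n⟧) ↔ Subsingleton (A ⟶ (S.inverse.obj B)⟦n⟧) :=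
  ((hS.subsingleton_hom_shift_iff_functor n A _).trans <|
    subsingleton_hom_congr (Iso.refl _) ((shiftFunctor C n).mapIso (S.counitIso.app B))).symm

lemma subsingleton_iterate_hom_shift_iff (n : ℤ) (t : ℕ) (A B : C) :
    Subsingleton ((S.functor.obj)^[t] A ⟶ B⟦n⟧) ↔
      Subsingleton (A ⟶ ((S.inverse.obj)^[t] B)⟦n⟧) := by
  induction t generalizing A with
  | zero => rfl
  | succ t ih =>
    rw [Function.iterate_succ_apply, ih, Function.iterate_succ_apply']
    exact hS.subsingleton_functor_hom_shift_iff n _ _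

end HasSerreDuality

end CategoryTheory

section

variable {C : Type} [Category C]

lemma equivPowObj_natCast (S : C ≌ C) (d : ℕ) (A : C) :
    equivPowObj S d A = (S.functor.obj)^[d] A := by
  simp [equivPowObj]

lemma equivPowObj_neg_natCast (S : C ≌ C) (d : ℕ) (A : C) :
    equivPowObj S (-d) A = (S.inverse.obj)^[d] A := by
  rcases d.eq_zero_or_pos with rfl | hd
  · simp [equivPowObj]
  · simp [equivPowObj, hd.ne']

namespace CategoryTheory.HasSerreDuality

variable {k : Type*} [Field k] [Preadditive C] [Linear k C] [HasShift C ℤ] {S : C ≌ C}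
  (hS : HasSerreDuality k S)
include hS

lemma subsingleton_iterate_hom_shift_iterate_iff (n : ℤ) (i j : ℕ) (X Y : C) :
    Subsingleton ((S.functor.obj)^[i] X ⟶ ((S.functor.obj)^[j] Y)⟦n⟧) ↔
      Subsingleton (X ⟶ (equivPowObj S (j - i) Y)⟦n⟧) := by
  rcases le_total i j with hij | hji
  · obtain ⟨d, rfl⟩ := Nat.exists_eq_add_of_le hij
    rw [Function.iterate_add_apply, ← hS.subsingleton_hom_shift_iff_iterate, Nat.cast_add,
      add_sub_cancel_left, equivPowObj_natCast]
  · obtain ⟨d, rfl⟩ := Nat.exists_eq_add_of_le hji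
    rw [Function.iterate_add_apply, ← hS.subsingleton_hom_shift_iff_iterate,
      hS.subsingleton_iterate_hom_shift_iff, Nat.cast_add, sub_add_cancel_left,
      equivPowObj_neg_natCast]

lemma subsingleton_iterate_hom_shift_iterate_iff_swap (n : ℤ) (i j : ℕ) (X Y : C) :
    Subsingleton ((S.functor.obj)^[j] Y ⟶ ((S.functor.obj)^[i] X)⟦n⟧) ↔
      Subsingleton (X ⟶ (equivPowObj S ((j + 1 : ℕ) - i) Y)⟦-n⟧) := by
  rw [hS.subsingleton_hom_shift_iff_swap, ← Function.iterate_succ_apply' S.functor.obj j Y,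
    hS.subsingleton_iterate_hom_shift_iterate_iff]

end CategoryTheory.HasSerreDuality

end

lemma forall_ne_zero_sub_and_succ_sub_iff (P : ℤ → ℤ → Prop) (m r : ℕ) :
    (∀ n : ℤ, n ≠ 0 →
      (∀ (i : Fin (m + 1)) (j : Fin (r + 1)), P ((j : ℕ) - (i : ℕ)) n) ∧
        ∀ (j : Fin (r + 1)) (i : Fin (m + 1)), P (((j + 1 : ℕ) : ℤ) - (i : ℕ)) (-n)) ↔
      ∀ z : ℤ, -(m : ℤ) ≤ z → z ≤ (r : ℤ) + 1 → ∀ n : ℤ, n ≠ 0 → P z n := by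
  constructor
  · intro h z hz₁ hz₂ n hn
    rcases hz₂.lt_or_eq with hz | rfl
    · obtain ⟨i, j, hij⟩ :
          ∃ (i : Fin (m + 1)) (j : Fin (r + 1)), ((j : ℕ) : ℤ) - (i : ℕ) = z := by
        rcases le_or_gt 0 z with h0 | h0
        · exact ⟨0, ⟨z.toNat, by omega⟩, by simp only [Fin.val_zero]; omega⟩
        · exact ⟨⟨(-z).toNat, by omega⟩, 0, by simp only [Fin.val_zero]; omega⟩
      exact hij ▸ (h n hn).1 i j
    · simpa using (h (-n) (neg_ne_zero.2 hn)).2 (Fin.last r) 0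
  · intro h n hn
    refine ⟨fun i j => h _ ?_ ?_ n hn, fun j i => h _ ?_ ?_ (-n) (neg_ne_zero.2 hn)⟩ <;>
      omega

/-- Lemma A.2: for a Hom-finite triangulated category D over a field k with Serre
functor S, and extension-free U = ⊕_{k=0}^m Sᵏ X and V = ⊕_{k=0}^r Sᵏ Y, the object
U ⊕ V is extension-free iff Hom(X, Sᵏ Y[n]) = 0 for all -m ≤ k ≤ r+1 and n ≠ 0. -/
theorem extension_free_sum_of_serre_orbits
    (k : Type) [Field k]
    (D : Type) [Category D] [Preadditive D] [Linear k D]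
    [HasZeroObject D] [HasShift D ℤ] [∀ n : ℤ, (shiftFunctor D n).Additive]
    [Pretriangulated D] [HasFiniteBiproducts D]
    [∀ A B : D, FiniteDimensional k (A ⟶ B)]
    (S : D ≌ D)
    (hSerre : ∀ A B : D, Nonempty ((A ⟶ B) ≃ₗ[k] Module.Dual k (B ⟶ S.functor.obj A)))
    (X Y : D) (m r : ℕ)
    (hU : ∀ n : ℤ, n ≠ 0 →
      ∀ f : (⨁ fun i : Fin (m + 1) => (S.functor.obj)^[(i : ℕ)] X) ⟶
        (shiftFunctor D n).obj (⨁ fun i : Fin (m + 1) => (S.functor.obj)^[(i : ℕ)] X),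
        f = 0)
    (hV : ∀ n : ℤ, n ≠ 0 →
      ∀ f : (⨁ fun i : Fin (r + 1) => (S.functor.obj)^[(i : ℕ)] Y) ⟶
        (shiftFunctor D n).obj (⨁ fun i : Fin (r + 1) => (S.functor.obj)^[(i : ℕ)] Y),
        f = 0) :
    (∀ n : ℤ, n ≠ 0 →
      ∀ f : ((⨁ fun i : Fin (m + 1) => (S.functor.obj)^[(i : ℕ)] X) ⊞
              (⨁ fun i : Fin (r + 1) => (S.functor.obj)^[(i : ℕ)] Y)) ⟶
        (shiftFunctor D n).obj
          ((⨁ fun i : Fin (m + 1) => (S.functor.obj)^[(i : ℕ)] X) ⊞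
            (⨁ fun i : Fin (r + 1) => (S.functor.obj)^[(i : ℕ)] Y)),
        f = 0) ↔
    (∀ z : ℤ, -(m : ℤ) ≤ z → z ≤ (r : ℤ) + 1 → ∀ n : ℤ, n ≠ 0 →
      ∀ f : X ⟶ (shiftFunctor D n).obj (equivPowObj S z Y), f = 0) := by
  have hS : HasSerreDuality k S := hSerre
  simp only [← subsingleton_iff_forall_eq (0 : _ ⟶ _)] at hU hV ⊢
  rw [← forall_ne_zero_sub_and_succ_sub_iff]
  refine forall₂_congr fun n hn => ?_
  rw [subsingleton_biprod_hom_map_biprod_iff]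
  simp only [hU n hn, hV n hn, true_and, and_true]
  rw [subsingleton_biproduct_hom_map_biproduct_iff, subsingleton_biproduct_hom_map_biproduct_iff]
  exact and_congr (forall₂_congr fun i j => hS.subsingleton_iterate_hom_shift_iterate_iff n i j X Y)
    (forall₂_congr fun j i => hS.subsingleton_iterate_hom_shift_iterate_iff_swap n i j X Y)
end
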